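/- arXiv:1312.1398 — 7 statements merged into one kernel-verified Lean document; each statement's English description precedes it below -/
import Mathlib

section
/- Let Q be a real symmetric n×n matrix whose smallest eigenvalue is negative, and let c ∈ R^n. Then every local minimizer y of the function f(x) = (1/2)x^T Q x + c^T x over the unit ball {x ∈ R^n : x^T x ≤ 1} lies on the boundary, i.e., satisfies y^T y = 1. -/
open Matrix

set_option maxHeartbeats 1000000 in
/-- Every local minimizer of the trust region subproblem `(T₀)` with an indefinite
Hessian (smallest eigenvalue of `Q` negative) lies on the boundary of the unit ball. -/
theorem stmt_0 {n : ℕ} (Q : Matrix (Fin n) (Fin n) ℝ) (hQsymm : Q.IsSymm)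
    (c : Fin n → ℝ)
    (lam : ℝ) (hlam_neg : lam < 0)
    (hlam_ev : ∃ v : Fin n → ℝ, v ≠ 0 ∧ Q.mulVec v = lam • v)
    (hlam_min : ∀ x : Fin n → ℝ, lam * (x ⬝ᵥ x) ≤ x ⬝ᵥ Q.mulVec x)
    (y : Fin n → ℝ) (hyfeas : y ⬝ᵥ y ≤ 1)
    (hylocmin : IsLocalMinOn
      (fun x : Fin n → ℝ => (1 / 2) * (x ⬝ᵥ Q.mulVec x) + c ⬝ᵥ x)
      {x : Fin n → ℝ | x ⬝ᵥ x ≤ 1} y) :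
    y ⬝ᵥ y = 1 := by
  by_contra hne
  have hlt : y ⬝ᵥ y < 1 := lt_of_le_of_ne hyfeas hne
  obtain ⟨v, hv0, hvev⟩ := hlam_ev
  set vv : ℝ := v ⬝ᵥ v with hvv
  have hvv_nonneg : 0 ≤ vv := Finset.sum_nonneg fun i _ => mul_self_nonneg _
  have hvv_pos : 0 < vv := by
    rcases hvv_nonneg.lt_or_eq with h | h
    · exact h
    · exact absurd (dotProduct_self_eq_zero.mp h.symm) hv0
  -- quadratic term in direction v
  have hvQv : v ⬝ᵥ Q.mulVec v = lam * vv := by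
    rw [hvev, dotProduct_smul, smul_eq_mul]
  have hsymmdot : ∀ x : Fin n → ℝ, x ⬝ᵥ Q.mulVec v = v ⬝ᵥ Q.mulVec x := by
    intro x
    rw [dotProduct_mulVec, ← mulVec_transpose, hQsymm.eq, dotProduct_comm]
  -- extract ε-ball from local min
  have hmem : {x : Fin n → ℝ | (fun x : Fin n → ℝ => (1 / 2) * (x ⬝ᵥ Q.mulVec x) + c ⬝ᵥ x) y
      ≤ (1 / 2) * (x ⬝ᵥ Q.mulVec x) + c ⬝ᵥ x} ∈
      nhdsWithin y {x : Fin n → ℝ | x ⬝ᵥ x ≤ 1} := hylocmin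
  rw [Metric.mem_nhdsWithin_iff] at hmem
  obtain ⟨ε, hε, hball⟩ := hmem
  -- constants
  set b : ℝ := y ⬝ᵥ Q.mulVec v + c ⬝ᵥ v with hb
  set δ : ℝ := 1 - y ⬝ᵥ y with hδ
  have hδpos : 0 < δ := by simp [hδ]; linarith
  set M : ℝ := 2 * |y ⬝ᵥ v| + vv + Real.sqrt vv + 1 with hM
  have hMpos : 0 < M := by
    have := abs_nonneg (y ⬝ᵥ v)
    have := Real.sqrt_nonneg vv
    nlinarith
  set s : ℝ := min ε (min δ 1) / M with hs
  have hspos : 0 < s := by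
    apply div_pos _ hMpos
    exact lt_min hε (lt_min hδpos one_pos)
  have hsM : s * M = min ε (min δ 1) := div_mul_cancel₀ _ (ne_of_gt hMpos)
  have hs1 : s ≤ 1 := by
    rw [hs, div_le_one hMpos]
    have h1 : min ε (min δ 1) ≤ 1 := le_trans (min_le_right _ _) (min_le_right _ _)
    have := abs_nonneg (y ⬝ᵥ v)
    have := Real.sqrt_nonneg vv
    nlinarith
  -- choose sign
  set t : ℝ := if 0 ≤ b then -s else s with ht
  have htabs : |t| = s := by
    rcases le_or_gt 0 b with h | h
    · rw [ht, if_pos h, abs_neg, abs_of_pos hspos]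
    · rw [ht, if_neg (not_le.mpr h), abs_of_pos hspos]
  have htb : t * b ≤ 0 := by
    rcases le_or_gt 0 b with h | h
    · simp only [ht, if_pos h]; nlinarith
    · simp only [ht, if_neg (not_le.mpr h)]; nlinarith
  have ht2 : t * t = s * s := by
    rcases le_or_gt 0 b with h | h
    · rw [ht, if_pos h]; ring
    · rw [ht, if_neg (not_le.mpr h)]
  set x : Fin n → ℝ := y + t • v with hx
  -- norm bound : ‖v‖ ≤ sqrt vv
  have hnormv : ‖v‖ ≤ Real.sqrt vv := by
    apply pi_norm_le_iff_of_nonneg (Real.sqrt_nonneg _) |>.mpr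
    intro i
    rw [Real.norm_eq_abs, ← Real.sqrt_sq_eq_abs]
    apply Real.sqrt_le_sqrt
    rw [hvv, dotProduct]
    have := Finset.single_le_sum (f := fun j => v j * v j)
      (fun j _ => mul_self_nonneg (v j)) (Finset.mem_univ i)
    nlinarith
  have hdist : dist x y < ε := by
    have : dist x y = |t| * ‖v‖ := by
      rw [hx, dist_eq_norm]
      simp [norm_smul, Real.norm_eq_abs]
    rw [this, htabs]
    have h1 : s * ‖v‖ ≤ s * Real.sqrt vv := by
      exact mul_le_mul_of_nonneg_left hnormv hspos.le
    have h2 : s * Real.sqrt vv < s * M := by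
      apply mul_lt_mul_of_pos_left _ hspos
      have := abs_nonneg (y ⬝ᵥ v)
      nlinarith
    have h3 : s * M ≤ ε := by rw [hsM]; exact min_le_left _ _
    linarith
  -- feasibility
  have hxx : x ⬝ᵥ x = y ⬝ᵥ y + 2 * (t * (y ⬝ᵥ v)) + t * t * vv := by
    rw [hx]
    simp only [add_dotProduct, dotProduct_add, smul_dotProduct, dotProduct_smul, smul_eq_mul]
    rw [dotProduct_comm v y]
    ring
  have hxfeas : x ⬝ᵥ x ≤ 1 := by
    rw [hxx, ht2]
    have h1 : t * (y ⬝ᵥ v) ≤ s * |y ⬝ᵥ v| := by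
      calc t * (y ⬝ᵥ v) ≤ |t * (y ⬝ᵥ v)| := le_abs_self _
        _ = s * |y ⬝ᵥ v| := by rw [abs_mul, htabs]
    have hss : s * s ≤ s := by nlinarith [mul_le_mul_of_nonneg_left hs1 hspos.le]
    have h2 : s * s * vv ≤ s * vv := mul_le_mul_of_nonneg_right hss hvv_nonneg
    have h3 : s * (2 * |y ⬝ᵥ v| + vv) ≤ s * M := by
      apply mul_le_mul_of_nonneg_left _ hspos.le
      have := Real.sqrt_nonneg vv
      nlinarith
    have h4 : s * M ≤ δ := by rw [hsM]; exact le_trans (min_le_right _ _) (min_le_left _ _)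
    simp only [hδ] at h4
    linarith
  -- value comparison
  have hval : (1 / 2) * (x ⬝ᵥ Q.mulVec x) + c ⬝ᵥ x
      = (1 / 2) * (y ⬝ᵥ Q.mulVec y) + c ⬝ᵥ y + t * b + t * t / 2 * (lam * vv) := by
    rw [hx]
    simp only [mulVec_add, mulVec_smul, add_dotProduct, dotProduct_add, smul_dotProduct,
      dotProduct_smul, smul_eq_mul, hb]
    rw [hsymmdot y, hvQv]
    ring
  have hltval : (1 / 2) * (x ⬝ᵥ Q.mulVec x) + c ⬝ᵥ x
      < (1 / 2) * (y ⬝ᵥ Q.mulVec y) + c ⬝ᵥ y := by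
    rw [hval]
    have hneg : t * t / 2 * (lam * vv) < 0 := by
      rw [ht2]
      apply mul_neg_of_pos_of_neg
      · positivity
      · exact mul_neg_of_neg_of_pos hlam_neg hvv_pos
    clear_value t s b vv
    linarith
  have := hball ⟨Metric.mem_ball.mpr hdist, hxfeas⟩
  simp only [Set.mem_setOf_eq] at this
  linarith
end

section
/- Let Σ = diag(σ_1, …, σ_n) with σ_1 ≤ σ_2 ≤ … ≤ σ_n and σ_1 < 0, let d ∈ R^n, and suppose the pair (y*, μ*) with μ* ≥ 0 satisfies (Σ + μ* I_n) y* + d = 0 and (y*)^T y* = 1. Then y* is a global minimizer of (1/2) y^T Σ y + d^T y over the unit ball {y ∈ R^n : y^T y ≤ 1} if and only if μ* ≥ −σ_1. -/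
set_option maxHeartbeats 1000000


/-- Global optimality characterization for the diagonalized trust region subproblem:
a KKT pair `(y*, μ*)` with `μ* ≥ 0`, `(Σ + μ* I) y* + d = 0` and `‖y*‖² = 1` is a
global minimizer iff `μ* ≥ -σ₁`. -/
theorem stmt_1 {n : ℕ} (hn : 0 < n) (σ : Fin n → ℝ) (hmono : Monotone σ)
    (hneg : σ ⟨0, hn⟩ < 0) (d ystar : Fin n → ℝ) (μstar : ℝ) (hμnonneg : 0 ≤ μstar)
    (hKKT : ∀ i, (σ i + μstar) * ystar i + d i = 0)
    (hsphere : ∑ i, ystar i * ystar i = 1) :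
    (∀ y : Fin n → ℝ, ∑ i, y i * y i ≤ 1 →
        (1 / 2) * ∑ i, σ i * ystar i ^ 2 + ∑ i, d i * ystar i ≤
          (1 / 2) * ∑ i, σ i * y i ^ 2 + ∑ i, d i * y i)
      ↔ -σ ⟨0, hn⟩ ≤ μstar := by
  set i0 : Fin n := ⟨0, hn⟩ with hi0
  clear_value i0
  have hd : ∀ i, d i = -((σ i + μstar) * ystar i) := fun i => by linarith [hKKT i]
  -- key identity
  have key : ∀ y : Fin n → ℝ,
      (1 / 2) * ∑ i, σ i * y i ^ 2 + ∑ i, d i * y i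
        = ((1 / 2) * ∑ i, σ i * ystar i ^ 2 + ∑ i, d i * ystar i)
          + ∑ i, ((1/2) * ((σ i + μstar) * (y i - ystar i)^2)
                  - (μstar/2) * (y i * y i - ystar i * ystar i)) := by
    intro y
    have h1 : ∀ i ∈ Finset.univ, σ i * y i ^ 2 * (1/2) + d i * y i
        = (σ i * ystar i ^ 2 * (1/2) + d i * ystar i)
          + ((1/2) * ((σ i + μstar) * (y i - ystar i)^2)
             - (μstar/2) * (y i * y i - ystar i * ystar i)) := by
      intro i _; rw [hd i]; ring
    have h2 := Finset.sum_congr rfl h1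
    simp only [Finset.sum_add_distrib] at h2
    rw [mul_comm ((1:ℝ)/2) (∑ i, σ i * y i ^ 2), Finset.sum_mul,
      mul_comm ((1:ℝ)/2) (∑ i, σ i * ystar i ^ 2), Finset.sum_mul]
    linarith [h2]
  constructor
  · intro hglob
    by_contra hlt
    push_neg at hlt
    have hε : σ i0 + μstar < 0 := by linarith
    by_cases h0 : ystar i0 = 0
    · -- find j with ystar j ≠ 0
      have hex : ∃ j, ystar j ≠ 0 := by
        by_contra hall; push_neg at hall
        simp [hall] at hsphere
      obtain ⟨j, hj⟩ := hex
      have hij : i0 ≠ j := fun h => hj (h ▸ h0)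
      set a := ystar j with ha
      clear_value a
      set M := σ j + μstar with hM
      clear_value M
      set ε := -(σ i0 + μstar) with hεdef
      clear_value ε
      have hεpos : 0 < ε := by rw [hεdef]; linarith
      set D := 2*(|M| + ε) with hD
      clear_value D
      have hDpos : 0 < D := by have := abs_nonneg M; rw [hD]; linarith
      set c := 1 - ε / D with hc
      clear_value c
      have hεD : ε / D ≤ 1/2 := by
        rw [div_le_iff₀ hDpos]; have := abs_nonneg M; rw [hD]; linarith
      have hεDpos : 0 < ε / D := div_pos hεpos hDpos
      have hc1 : c < 1 := by rw [hc]; linarith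
      have hc2 : 1/2 ≤ c := by rw [hc]; linarith
      have h1c : (0:ℝ) < 1 - c := by linarith
      have hcsq : (0:ℝ) ≤ 1 - c^2 := by
        nlinarith [mul_pos h1c (show (0:ℝ) < 1 + c by linarith)]
      set t := a * Real.sqrt (1 - c^2) with htdef
      clear_value t
      have ht2 : t^2 = a^2 * (1 - c^2) := by
        rw [htdef, mul_pow, Real.sq_sqrt hcsq]
      set y := Function.update (Function.update ystar i0 t) j (c*a) with hy
      clear_value y
      have hyi0 : y i0 = t := by
        rw [hy, Function.update_of_ne hij, Function.update_self]
      have hyj : y j = c*a := by rw [hy, Function.update_self]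
      have hyother : ∀ i, i ≠ i0 → i ≠ j → y i = ystar i := by
        intro i h1 h2
        rw [hy, Function.update_of_ne h2, Function.update_of_ne h1]
      have pairsum : ∀ g : Fin n → ℝ, (∀ i, i ≠ i0 → i ≠ j → g i = 0) →
          ∑ i, g i = g i0 + g j := by
        intro g hg
        rw [← Finset.sum_pair hij]
        refine (Finset.sum_subset (Finset.subset_univ _) ?_).symm
        intro x _ hx
        simp only [Finset.mem_insert, Finset.mem_singleton, not_or] at hx
        exact hg x hx.1 hx.2
      have hdiff : ∑ i, (y i * y i - ystar i * ystar i)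
          = (t * t - 0) + (c*a*(c*a) - a*a) := by
        rw [pairsum _ (fun i h1 h2 => by rw [hyother i h1 h2]; ring)]
        rw [hyi0, hyj, h0, ← ha]; ring
      have hS2 : ∑ i, y i * y i = 1 := by
        have hsplit : ∑ i, y i * y i
            = ∑ i, ystar i * ystar i + ∑ i, (y i * y i - ystar i * ystar i) := by
          rw [← Finset.sum_add_distrib]; apply Finset.sum_congr rfl; intro i _; ring
        rw [hsplit, hsphere, hdiff]; nlinarith [ht2]
      have hS1 : ∑ i, ((1/2) * ((σ i + μstar) * (y i - ystar i)^2)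
                  - (μstar/2) * (y i * y i - ystar i * ystar i))
          = (1/2) * ((σ i0 + μstar) * (t - 0)^2) - (μstar/2) * (t * t - 0)
            + ((1/2) * (M * (c*a - a)^2) - (μstar/2) * (c*a*(c*a) - a*a)) := by
        rw [pairsum _ (fun i h1 h2 => by rw [hyother i h1 h2]; ring)]
        rw [hyi0, hyj, h0, ← ha, ← hM]; ring
      have hle := hglob y (le_of_eq hS2)
      rw [key y, hS1] at hle
      have hX : (0:ℝ) ≤ (1/2) * ((σ i0 + μstar) * (t - 0)^2) - (μstar/2) * (t * t - 0)
            + ((1/2) * (M * (c*a - a)^2) - (μstar/2) * (c*a*(c*a) - a*a)) := by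
        linarith [hle]
      -- bracket bound
      have hMc : M * (ε/D) ≤ ε/2 := by
        have h1 : M * (ε/D) ≤ |M| * (ε/D) :=
          mul_le_mul_of_nonneg_right (le_abs_self M) (le_of_lt hεDpos)
        have h2 : |M| * (ε/D) ≤ ε/2 := by
          rw [← mul_div_assoc, div_le_div_iff₀ hDpos (by norm_num : (0:ℝ) < 2)]
          have h3 := abs_nonneg M
          nlinarith
        linarith
      have hbr : (σ i0 + μstar)*(1+c) + M*(1-c) ≤ -ε := by
        have h1cd : 1 - c = ε/D := by rw [hc]; ring
        have hεc : ε*(1/2) ≤ ε*c := mul_le_mul_of_nonneg_left hc2 hεpos.le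
        have hs0 : (σ i0 + μstar)*(1+c) = -(ε*1) - ε*c := by rw [hεdef]; ring
        rw [h1cd, hs0]
        nlinarith [hMc]
      have hXval : (1/2) * ((σ i0 + μstar) * (t - 0)^2) - (μstar/2) * (t * t - 0)
            + ((1/2) * (M * (c*a - a)^2) - (μstar/2) * (c*a*(c*a) - a*a))
          = (a^2/2) * ((1-c) * ((σ i0 + μstar)*(1+c) + M*(1-c))) := by
        linear_combination (σ i0 / 2) * ht2
      have ha2 : (0:ℝ) < a^2 := by positivity
      have hpos2 : (0:ℝ) < (a^2/2)*(1-c) := by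
        apply mul_pos (by positivity) h1c
      have hfin := mul_le_mul_of_nonneg_left hbr (le_of_lt hpos2)
      nlinarith [hX, hXval, hfin, mul_pos hpos2 hεpos]
    · -- flip sign at i0
      set y := Function.update ystar i0 (-(ystar i0)) with hy
      clear_value y
      have hyi0 : y i0 = -(ystar i0) := by rw [hy, Function.update_self]
      have hyother : ∀ i, i ≠ i0 → y i = ystar i := by
        intro i h1; rw [hy, Function.update_of_ne h1]
      have hS2 : ∑ i, y i * y i = 1 := by
        rw [← hsphere]
        apply Finset.sum_congr rfl
        intro i _
        by_cases h : i = i0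
        · rw [h, hyi0]; ring
        · rw [hyother i h]
      have singsum : ∀ g : Fin n → ℝ, (∀ i, i ≠ i0 → g i = 0) →
          ∑ i, g i = g i0 := by
        intro g hg
        exact Finset.sum_eq_single_of_mem i0 (Finset.mem_univ _)
          (fun b _ hb => hg b hb)
      have hS1 : ∑ i, ((1/2) * ((σ i + μstar) * (y i - ystar i)^2)
                  - (μstar/2) * (y i * y i - ystar i * ystar i))
          = (1/2) * ((σ i0 + μstar) * (-(ystar i0) - ystar i0)^2)
            - (μstar/2) * ((-(ystar i0)) * (-(ystar i0)) - ystar i0 * ystar i0) := by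
        rw [singsum _ (fun i h1 => by rw [hyother i h1]; ring)]
        rw [hyi0]
      have hle := hglob y (le_of_eq hS2)
      rw [key y, hS1] at hle
      have hsq : 0 < ystar i0 * ystar i0 := by
        rcases lt_or_gt_of_ne h0 with h | h
        · nlinarith
        · nlinarith
      nlinarith [hle, mul_neg_of_neg_of_pos hε hsq]
  · intro hge y hy
    rw [key y]
    have hsplit : ∑ i, ((1/2) * ((σ i + μstar) * (y i - ystar i)^2)
            - (μstar/2) * (y i * y i - ystar i * ystar i))
        = ∑ i, (1/2) * ((σ i + μstar) * (y i - ystar i)^2)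
          - (μstar/2) * (∑ i, y i * y i - 1) := by
      have hB : ∑ i, (μstar/2) * (y i * y i - ystar i * ystar i)
          = (μstar/2) * (∑ i, y i * y i - 1) := by
        rw [← Finset.mul_sum, Finset.sum_sub_distrib, hsphere]
      rw [Finset.sum_sub_distrib, hB]
    have h1 : 0 ≤ ∑ i, (1/2) * ((σ i + μstar) * (y i - ystar i)^2) := by
      apply Finset.sum_nonneg
      intro i _
      have hle : σ i0 ≤ σ i := hmono (by simp [hi0, Fin.le_def])
      have : 0 ≤ σ i + μstar := by linarith
      positivity
    have h2 : (μstar/2) * (∑ i, y i * y i - 1) ≤ 0 := by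
      apply mul_nonpos_of_nonneg_of_nonpos
      · linarith
      · linarith
    rw [hsplit]
    linarith
end

section
/- Let σ_1 = … = σ_k < σ_{k+1} ≤ … ≤ σ_n with σ_1 < 0, let d ∈ R^n, and suppose d_1^2 + … + d_k^2 > 0. Then the secular function φ(μ) = Σ_{i=1}^n d_i^2/(σ_i + μ)^2 − 1 satisfies: φ(μ) → +∞ as μ → (−σ_1)^+, φ(μ) → −1 as μ → +∞, φ is strictly decreasing on (−σ_1, ∞), and hence φ has a unique root μ* on (−σ_1, ∞). Moreover, the point y* defined by y*_i = −d_i/(σ_i + μ*) for i = 1, …, n is the unique global minimizer of (1/2) y^T Σ y + d^T y over {y ∈ R^n : y^T y ≤ 1}, where Σ = diag(σ_1, …, σ_n). -/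
open Set Filter Topology

/-- If `σ₁ = … = σ_k < σ_{k+1} ≤ … ≤ σ_n`, `σ₁ < 0` and `d₁² + … + d_k² > 0`, then the
secular function `φ(μ) = Σ dᵢ²/(σᵢ+μ)² - 1` tends to `+∞` as `μ → (-σ₁)⁺`, tends to `-1`
as `μ → +∞`, is strictly decreasing on `(-σ₁, ∞)`, has a unique root `μ*` there, and
`y*ᵢ = -dᵢ/(σᵢ+μ*)` is the unique global minimizer of `(1/2)yᵀΣy + dᵀy` on the unit ball. -/
theorem stmt_3 {n : ℕ} (hn : 0 < n) (k : ℕ) (hk1 : 1 ≤ k) (hkn : k ≤ n)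
    (σ d : Fin n → ℝ) (hmono : Monotone σ)
    (hflat : ∀ i : Fin n, (i : ℕ) < k → σ i = σ ⟨0, hn⟩)
    (hgap : ∀ i : Fin n, k ≤ (i : ℕ) → σ ⟨0, hn⟩ < σ i)
    (hneg : σ ⟨0, hn⟩ < 0)
    (hd : 0 < ∑ i ∈ Finset.univ.filter (fun i : Fin n => (i : ℕ) < k), d i ^ 2) :
    Tendsto (fun μ : ℝ => ∑ i, d i ^ 2 / (σ i + μ) ^ 2 - 1)
        (𝓝[>] (-σ ⟨0, hn⟩)) atTop ∧
      Tendsto (fun μ : ℝ => ∑ i, d i ^ 2 / (σ i + μ) ^ 2 - 1) atTop (𝓝 (-1)) ∧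
      StrictAntiOn (fun μ : ℝ => ∑ i, d i ^ 2 / (σ i + μ) ^ 2 - 1)
        (Set.Ioi (-σ ⟨0, hn⟩)) ∧
      (∃! μ : ℝ, μ ∈ Set.Ioi (-σ ⟨0, hn⟩) ∧ ∑ i, d i ^ 2 / (σ i + μ) ^ 2 - 1 = 0) ∧
      ∀ μstar : ℝ, μstar ∈ Set.Ioi (-σ ⟨0, hn⟩) →
        ∑ i, d i ^ 2 / (σ i + μstar) ^ 2 - 1 = 0 →
        ∀ y : Fin n → ℝ,
          ((∑ i, y i * y i ≤ 1 ∧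
              ∀ x : Fin n → ℝ, ∑ i, x i * x i ≤ 1 →
                (1 / 2) * ∑ i, σ i * y i ^ 2 + ∑ i, d i * y i ≤
                  (1 / 2) * ∑ i, σ i * x i ^ 2 + ∑ i, d i * x i)
            ↔ y = fun i => -d i / (σ i + μstar)) := by
  set s0 := σ ⟨0, hn⟩ with hs0
  have hle : ∀ i : Fin n, s0 ≤ σ i := fun i => hmono (by simp [Fin.le_def])
  have hpos : ∀ μ : ℝ, -s0 < μ → ∀ i : Fin n, 0 < σ i + μ := by
    intro μ hμ i
    have := hle i; linarith
  set S := ∑ i ∈ Finset.univ.filter (fun i : Fin n => (i : ℕ) < k), d i ^ 2 with hS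
  -- Part 1
  have h1 : Tendsto (fun μ : ℝ => ∑ i, d i ^ 2 / (σ i + μ) ^ 2 - 1)
      (𝓝[>] (-s0)) atTop := by
    have ht0 : Tendsto (fun μ : ℝ => (s0 + μ) ^ 2) (𝓝[>] (-s0)) (𝓝[>] 0) := by
      apply tendsto_nhdsWithin_of_tendsto_nhds_of_eventually_within
      · have hc : Continuous fun μ : ℝ => (s0 + μ) ^ 2 := by continuity
        have h := hc.tendsto (-s0)
        simpa using h.mono_left nhdsWithin_le_nhds
      · filter_upwards [self_mem_nhdsWithin] with μ hμ
        have hμ' : -s0 < μ := hμ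
        have : 0 < s0 + μ := by linarith
        exact pow_pos this 2
    have hinv : Tendsto (fun μ : ℝ => S / (s0 + μ) ^ 2) (𝓝[>] (-s0)) atTop := by
      simp_rw [div_eq_mul_inv]
      exact Tendsto.const_mul_atTop hd (tendsto_inv_nhdsGT_zero.comp ht0)
    have hlb := tendsto_atTop_add_const_right _ (-1) hinv
    apply tendsto_atTop_mono' _ _ hlb
    filter_upwards [self_mem_nhdsWithin] with μ hμ
    have hμ' : -s0 < μ := hμ
    have heq : S / (s0 + μ) ^ 2 = ∑ i ∈ Finset.univ.filter (fun i : Fin n => (i : ℕ) < k),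
        d i ^ 2 / (σ i + μ) ^ 2 := by
      rw [hS, Finset.sum_div]
      exact Finset.sum_congr rfl (fun i hi => by
        rw [hflat i (Finset.mem_filter.mp hi).2])
    have hsub := Finset.sum_le_sum_of_subset_of_nonneg
      (Finset.filter_subset (fun i : Fin n => (i : ℕ) < k) Finset.univ)
      (fun i _ _ => by positivity : ∀ i ∈ Finset.univ, _ ∉ _ → (0:ℝ) ≤ d i ^ 2 / (σ i + μ) ^ 2)
    have : S / (s0 + μ) ^ 2 ≤ ∑ i, d i ^ 2 / (σ i + μ) ^ 2 := heq ▸ hsub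
    linarith
  -- Part 2
  have h2 : Tendsto (fun μ : ℝ => ∑ i, d i ^ 2 / (σ i + μ) ^ 2 - 1) atTop (𝓝 (-1)) := by
    have hsum : Tendsto (fun μ : ℝ => ∑ i, d i ^ 2 / (σ i + μ) ^ 2) atTop (𝓝 0) := by
      have h0 : (0 : ℝ) = ∑ _i : Fin n, (0 : ℝ) := by simp
      rw [h0]
      apply tendsto_finset_sum
      intro i _
      have hX : Tendsto (fun μ : ℝ => (σ i + μ) ^ 2) atTop atTop :=
        (tendsto_pow_atTop two_ne_zero).comp (tendsto_atTop_add_const_left _ (σ i) tendsto_id)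
      have := (tendsto_inv_atTop_zero.comp hX).const_mul (d i ^ 2)
      simpa [div_eq_mul_inv] using this
    have := hsum.sub_const 1
    simpa using this
  -- Part 3
  have h3 : StrictAntiOn (fun μ : ℝ => ∑ i, d i ^ 2 / (σ i + μ) ^ 2 - 1) (Set.Ioi (-s0)) := by
    intro μ₁ hμ₁ μ₂ hμ₂ h12
    simp only [Set.mem_Ioi] at hμ₁ hμ₂
    obtain ⟨j, hjk, hdj⟩ : ∃ j ∈ Finset.univ.filter (fun i : Fin n => (i : ℕ) < k), d j ≠ 0 := by
      by_contra hc
      push_neg at hc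
      have : S = 0 := Finset.sum_eq_zero (fun i hi => by rw [hc i hi]; ring)
      linarith
    have key : ∑ i, d i ^ 2 / (σ i + μ₂) ^ 2 < ∑ i, d i ^ 2 / (σ i + μ₁) ^ 2 := by
      apply Finset.sum_lt_sum
      · intro i _
        have p1 := hpos μ₁ hμ₁ i
        have p2 := hpos μ₂ hμ₂ i
        gcongr
      · refine ⟨j, Finset.mem_univ j, ?_⟩
        have p1 := hpos μ₁ hμ₁ j
        have p2 := hpos μ₂ hμ₂ j
        have hnum : 0 < d j ^ 2 := lt_of_le_of_ne (sq_nonneg _) (Ne.symm (pow_ne_zero 2 hdj))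
        apply div_lt_div_of_pos_left hnum (pow_pos p1 2)
        nlinarith
    simpa using key
  -- Part 4
  have h4 : ∃! μ : ℝ, μ ∈ Set.Ioi (-s0) ∧ ∑ i, d i ^ 2 / (σ i + μ) ^ 2 - 1 = 0 := by
    obtain ⟨a, ha0, haI⟩ := ((h1.eventually_gt_atTop 0).and eventually_mem_nhdsWithin).exists
    have haI' : -s0 < a := haI
    obtain ⟨b, hb0, hba⟩ := ((h2.eventually_lt_const (show (-1:ℝ) < 0 by norm_num)).and
      (eventually_gt_atTop a)).exists
    have hcont : ContinuousOn (fun μ : ℝ => ∑ i, d i ^ 2 / (σ i + μ) ^ 2 - 1)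
        (Set.Icc a b) := by
      apply ContinuousOn.sub _ continuousOn_const
      apply continuousOn_finset_sum
      intro i _
      apply ContinuousOn.div continuousOn_const
      · exact ((continuous_const.add continuous_id).pow 2).continuousOn
      · intro μ hμ
        have : 0 < σ i + μ := hpos μ (lt_of_lt_of_le haI' hμ.1) i
        positivity
    have hsub : Set.Icc ((fun μ : ℝ => ∑ i, d i ^ 2 / (σ i + μ) ^ 2 - 1) b)
        ((fun μ : ℝ => ∑ i, d i ^ 2 / (σ i + μ) ^ 2 - 1) a) ⊆
        (fun μ : ℝ => ∑ i, d i ^ 2 / (σ i + μ) ^ 2 - 1) '' Set.Icc a b :=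
      intermediate_value_Icc' (le_of_lt hba) hcont
    obtain ⟨μ, hμab, hμ0⟩ := hsub ⟨le_of_lt hb0, le_of_lt ha0⟩
    have hμI : μ ∈ Set.Ioi (-s0) := lt_of_lt_of_le haI' hμab.1
    refine ⟨μ, ⟨hμI, hμ0⟩, ?_⟩
    rintro μ' ⟨hμ'I, hμ'0⟩
    exact h3.injOn hμ'I hμI (hμ'0.trans hμ0.symm)
  refine ⟨h1, h2, h3, h4, ?_⟩
  -- Part 5
  intro μstar hμstar hroot y
  have hμ' : -s0 < μstar := hμstar
  have ha : ∀ i : Fin n, 0 < σ i + μstar := hpos μstar hμ'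
  have hμpos : 0 < μstar := by linarith
  have hnorm : ∑ i, (-d i / (σ i + μstar)) * (-d i / (σ i + μstar)) = 1 := by
    have : ∀ i : Fin n, (-d i / (σ i + μstar)) * (-d i / (σ i + μstar))
        = d i ^ 2 / (σ i + μstar) ^ 2 := by
      intro i
      rw [div_mul_div_comm, neg_mul_neg, ← sq, ← sq]
    rw [Finset.sum_congr rfl (fun i _ => this i)]
    linarith
  have hF : ∀ x : Fin n → ℝ, (1 / 2) * ∑ i, σ i * x i ^ 2 + ∑ i, d i * x i
      = (∑ i, (σ i + μstar) / 2 * (x i - (-d i / (σ i + μstar))) ^ 2)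
        - μstar / 2 * (∑ i, x i * x i) - ∑ i, d i ^ 2 / (2 * (σ i + μstar)) := by
    intro x
    rw [Finset.mul_sum, Finset.mul_sum, ← Finset.sum_add_distrib,
      ← Finset.sum_sub_distrib, ← Finset.sum_sub_distrib]
    refine Finset.sum_congr rfl (fun i _ => ?_)
    have hai : σ i + μstar ≠ 0 := ne_of_gt (ha i)
    field_simp
    ring
  have hQnonneg : ∀ x : Fin n → ℝ,
      0 ≤ ∑ i, (σ i + μstar) / 2 * (x i - (-d i / (σ i + μstar))) ^ 2 :=
    fun x => Finset.sum_nonneg fun i _ => by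
      have := ha i; positivity
  have hFystar : (1 / 2) * ∑ i, σ i * (-d i / (σ i + μstar)) ^ 2
      + ∑ i, d i * (-d i / (σ i + μstar))
      = - (μstar / 2) - ∑ i, d i ^ 2 / (2 * (σ i + μstar)) := by
    rw [hF (fun i => -d i / (σ i + μstar))]
    simp only [sub_self, ne_eq, OfNat.ofNat_ne_zero, not_false_eq_true, zero_pow, mul_zero,
      Finset.sum_const_zero]
    rw [hnorm]
    ring
  constructor
  · rintro ⟨hyfeas, hymin⟩
    have hle' := hymin (fun i => -d i / (σ i + μstar)) (le_of_eq hnorm)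
    rw [hF y, hFystar] at hle'
    have hQy : 0 ≤ ∑ i, (σ i + μstar) / 2 * (y i - (-d i / (σ i + μstar))) ^ 2 := hQnonneg y
    have hQy0 : ∑ i, (σ i + μstar) / 2 * (y i - (-d i / (σ i + μstar))) ^ 2 = 0 := by
      nlinarith
    funext i
    have hterm := (Finset.sum_eq_zero_iff_of_nonneg
      (fun i _ => by have := ha i; positivity)).mp hQy0 i (Finset.mem_univ i)
    have h2' : (y i - (-d i / (σ i + μstar))) ^ 2 = 0 := by
      have hai : (σ i + μstar) / 2 ≠ 0 := by have := ha i; positivity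
      exact (mul_eq_zero.mp hterm).resolve_left hai
    have := pow_eq_zero_iff (n := 2) (by norm_num) |>.mp h2'
    have := sub_eq_zero.mp this
    simpa using this
  · intro hy
    subst hy
    refine ⟨le_of_eq hnorm, fun x hx => ?_⟩
    rw [hF x, hFystar]
    have hQx := hQnonneg x
    nlinarith
end

section
/- Let σ_1 = … = σ_k < σ_{k+1} ≤ … ≤ σ_n with σ_1 < 0, let d ∈ R^n with d_1 = … = d_k = 0, and suppose Σ_{i=k+1}^n d_i^2/(σ_i − σ_1)^2 ≤ 1. Then the set of global minimizers of (1/2) y^T Σ y + d^T y over {y ∈ R^n : y^T y ≤ 1}, where Σ = diag(σ_1, …, σ_n), is exactly the k-dimensional sphere { y ∈ R^n : y_i = −d_i/(σ_i − σ_1) for i = k+1, …, n, and y_1^2 + … + y_k^2 = 1 − Σ_{i=k+1}^n d_i^2/(σ_i − σ_1)^2 }. -/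
/-- If `σ₁ = … = σ_k < σ_{k+1} ≤ … ≤ σ_n`, `σ₁ < 0`, `d₁ = … = d_k = 0` and
`Σ_{i>k} dᵢ²/(σᵢ-σ₁)² ≤ 1`, then the global minimizers of `(1/2)yᵀΣy + dᵀy` over the
unit ball form exactly the `k`-dimensional sphere
`{y : yᵢ = -dᵢ/(σᵢ-σ₁) for i > k, y₁² + … + y_k² = 1 - Σ_{i>k} dᵢ²/(σᵢ-σ₁)²}`. -/
theorem stmt_4 {n : ℕ} (hn : 0 < n) (k : ℕ) (hk1 : 1 ≤ k) (hkn : k ≤ n)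
    (σ d : Fin n → ℝ) (hmono : Monotone σ)
    (hflat : ∀ i : Fin n, (i : ℕ) < k → σ i = σ ⟨0, hn⟩)
    (hgap : ∀ i : Fin n, k ≤ (i : ℕ) → σ ⟨0, hn⟩ < σ i)
    (hneg : σ ⟨0, hn⟩ < 0)
    (hdzero : ∀ i : Fin n, (i : ℕ) < k → d i = 0)
    (hradius : ∑ i ∈ Finset.univ.filter (fun i : Fin n => k ≤ (i : ℕ)),
        d i ^ 2 / (σ i - σ ⟨0, hn⟩) ^ 2 ≤ 1) :
    {y : Fin n → ℝ | ∑ i, y i * y i ≤ 1 ∧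
        ∀ x : Fin n → ℝ, ∑ i, x i * x i ≤ 1 →
          (1 / 2) * ∑ i, σ i * y i ^ 2 + ∑ i, d i * y i ≤
            (1 / 2) * ∑ i, σ i * x i ^ 2 + ∑ i, d i * x i} =
      {y : Fin n → ℝ | (∀ i : Fin n, k ≤ (i : ℕ) → y i = -d i / (σ i - σ ⟨0, hn⟩)) ∧
        ∑ i ∈ Finset.univ.filter (fun i : Fin n => (i : ℕ) < k), y i ^ 2 =
          1 - ∑ i ∈ Finset.univ.filter (fun i : Fin n => k ≤ (i : ℕ)),
            d i ^ 2 / (σ i - σ ⟨0, hn⟩) ^ 2} := by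
  classical
  set s : ℝ := σ ⟨0, hn⟩ with hs_def
  set A : Finset (Fin n) := Finset.univ.filter (fun i : Fin n => (i : ℕ) < k) with hA_def
  set B : Finset (Fin n) := Finset.univ.filter (fun i : Fin n => k ≤ (i : ℕ)) with hB_def
  have hsplit : ∀ g : Fin n → ℝ, ∑ i, g i = ∑ i ∈ A, g i + ∑ i ∈ B, g i := by
    intro g
    rw [← Finset.sum_filter_add_sum_filter_not Finset.univ (fun i : Fin n => (i : ℕ) < k) g]
    congr 1
    apply Finset.sum_congr _ (fun _ _ => rfl)
    simp [hB_def, not_lt]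
  have hmemA : ∀ i : Fin n, i ∈ A ↔ (i : ℕ) < k := by intro i; simp [hA_def]
  have hmemB : ∀ i : Fin n, i ∈ B ↔ k ≤ (i : ℕ) := by intro i; simp [hB_def]
  have hc : ∀ i ∈ B, 0 < σ i - s := by
    intro i hi
    have := hgap i ((hmemB i).1 hi)
    linarith
  set R : ℝ := ∑ i ∈ B, d i ^ 2 / (σ i - s) ^ 2 with hR_def
  set m : ℝ := s / 2 - ∑ i ∈ B, d i ^ 2 / (2 * (σ i - s)) with hm_def
  -- key identity
  have hiden : ∀ y : Fin n → ℝ,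
      (1 / 2) * ∑ i, σ i * y i ^ 2 + ∑ i, d i * y i
        = s / 2 * (∑ i, y i * y i)
          + ∑ i ∈ B, (σ i - s) / 2 * (y i + d i / (σ i - s)) ^ 2
          - ∑ i ∈ B, d i ^ 2 / (2 * (σ i - s)) := by
    intro y
    have h1 : ∀ i ∈ A, (1 / 2) * (σ i * y i ^ 2) + d i * y i = s / 2 * (y i * y i) := by
      intro i hi
      have hik := (hmemA i).1 hi
      rw [hflat i hik, hdzero i hik]
      ring
    have h2 : ∀ i ∈ B, (1 / 2) * (σ i * y i ^ 2) + d i * y i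
        = s / 2 * (y i * y i)
          + ((σ i - s) / 2 * (y i + d i / (σ i - s)) ^ 2 - d i ^ 2 / (2 * (σ i - s))) := by
      intro i hi
      have hci := hc i hi
      have hne : σ i - s ≠ 0 := ne_of_gt hci
      field_simp
      ring
    calc (1 / 2) * ∑ i, σ i * y i ^ 2 + ∑ i, d i * y i
        = ∑ i, ((1 / 2) * (σ i * y i ^ 2) + d i * y i) := by
          rw [Finset.sum_add_distrib, ← Finset.mul_sum]
      _ = ∑ i ∈ A, ((1 / 2) * (σ i * y i ^ 2) + d i * y i)
          + ∑ i ∈ B, ((1 / 2) * (σ i * y i ^ 2) + d i * y i) := hsplit _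
      _ = ∑ i ∈ A, s / 2 * (y i * y i)
          + ∑ i ∈ B, (s / 2 * (y i * y i)
            + ((σ i - s) / 2 * (y i + d i / (σ i - s)) ^ 2 - d i ^ 2 / (2 * (σ i - s)))) := by
          rw [Finset.sum_congr rfl h1, Finset.sum_congr rfl h2]
      _ = s / 2 * (∑ i, y i * y i)
          + ∑ i ∈ B, (σ i - s) / 2 * (y i + d i / (σ i - s)) ^ 2
          - ∑ i ∈ B, d i ^ 2 / (2 * (σ i - s)) := by
          rw [Finset.sum_add_distrib, Finset.sum_sub_distrib, hsplit (fun i => y i * y i),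
            mul_add, Finset.mul_sum, Finset.mul_sum]
          ring
  have hs2 : s / 2 < 0 := by linarith
  -- lower bound
  have hlow : ∀ x : Fin n → ℝ, ∑ i, x i * x i ≤ 1 →
      m ≤ (1 / 2) * ∑ i, σ i * x i ^ 2 + ∑ i, d i * x i := by
    intro x hx
    rw [hiden x]
    have hP : 0 ≤ ∑ i ∈ B, (σ i - s) / 2 * (x i + d i / (σ i - s)) ^ 2 := by
      apply Finset.sum_nonneg
      intro i hi
      have := hc i hi
      positivity
    have hT : s / 2 ≤ s / 2 * (∑ i, x i * x i) := by nlinarith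
    rw [hm_def]
    linarith
  have hR1 : 0 ≤ 1 - R := by rw [hR_def]; linarith [hradius]
  -- witness
  set ystar : Fin n → ℝ := fun i =>
    if k ≤ (i : ℕ) then -d i / (σ i - s) else if (i : ℕ) = 0 then Real.sqrt (1 - R) else 0
    with hy_def
  have hystarB : ∀ i ∈ B, ystar i = -d i / (σ i - s) := by
    intro i hi
    simp [hy_def, (hmemB i).1 hi]
  have hystarT : ∑ i, ystar i * ystar i = 1 := by
    rw [hsplit]
    have hBsum : ∑ i ∈ B, ystar i * ystar i = R := by
      rw [hR_def]
      apply Finset.sum_congr rfl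
      intro i hi
      rw [hystarB i hi, div_mul_div_comm, neg_mul_neg, ← pow_two, ← pow_two]
    have hAsum : ∑ i ∈ A, ystar i * ystar i = 1 - R := by
      have h0A : (⟨0, hn⟩ : Fin n) ∈ A := by rw [hmemA]; simp only [Fin.val_mk]; omega
      rw [Finset.sum_eq_single_of_mem ⟨0, hn⟩ h0A]
      · have hnk : ¬ k ≤ ((⟨0, hn⟩ : Fin n) : ℕ) := by simp only [Fin.val_mk]; omega
        simp only [hy_def, hnk, if_false, if_true]
        simp [Real.mul_self_sqrt hR1]
      · intro i hi hne
        have hik := (hmemA i).1 hi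
        have hnk : ¬ k ≤ (i : ℕ) := not_le.2 hik
        have hne0 : (i : ℕ) ≠ 0 := by
          intro h
          apply hne
          apply Fin.ext
          simpa using h
        simp [hy_def, hnk, hne0]
    rw [hAsum, hBsum]; ring
  have hystarval : (1 / 2) * ∑ i, σ i * ystar i ^ 2 + ∑ i, d i * ystar i = m := by
    rw [hiden ystar, hystarT]
    have hP0 : ∑ i ∈ B, (σ i - s) / 2 * (ystar i + d i / (σ i - s)) ^ 2 = 0 := by
      apply Finset.sum_eq_zero
      intro i hi
      rw [hystarB i hi]
      ring
    rw [hP0, hm_def]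
    ring
  -- set equality
  ext y
  simp only [Set.mem_setOf_eq]
  constructor
  · rintro ⟨hfeas, hmin⟩
    have hle : (1 / 2) * ∑ i, σ i * y i ^ 2 + ∑ i, d i * y i ≤ m := by
      calc (1 / 2) * ∑ i, σ i * y i ^ 2 + ∑ i, d i * y i
          ≤ (1 / 2) * ∑ i, σ i * ystar i ^ 2 + ∑ i, d i * ystar i :=
            hmin ystar (le_of_eq hystarT)
        _ = m := hystarval
    have heq : (1 / 2) * ∑ i, σ i * y i ^ 2 + ∑ i, d i * y i = m :=
      le_antisymm hle (hlow y hfeas)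
    rw [hiden y, hm_def] at heq
    set T : ℝ := ∑ i, y i * y i with hT_def
    set P : ℝ := ∑ i ∈ B, (σ i - s) / 2 * (y i + d i / (σ i - s)) ^ 2 with hP_def
    have hP : 0 ≤ P := by
      apply Finset.sum_nonneg
      intro i hi
      have := hc i hi
      positivity
    have hPeq : P = s / 2 * (1 - T) := by linarith
    have hT1 : T = 1 := by nlinarith
    have hP0 : P = 0 := by rw [hPeq, hT1]; ring
    have hterm : ∀ i ∈ B, (σ i - s) / 2 * (y i + d i / (σ i - s)) ^ 2 = 0 := by
      intro i hi
      have := (Finset.sum_eq_zero_iff_of_nonneg (fun i hi => by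
        have := hc i hi; positivity)).1 hP0 i hi
      exact this
    have hyB : ∀ i : Fin n, k ≤ (i : ℕ) → y i = -d i / (σ i - s) := by
      intro i hik
      have hi : i ∈ B := (hmemB i).2 hik
      have h := hterm i hi
      have hci := hc i hi
      have h2 : (0:ℝ) < (σ i - s) / 2 := by linarith
      have hsq : (y i + d i / (σ i - s)) ^ 2 = 0 := by
        rcases mul_eq_zero.1 h with h' | h'
        · exact absurd h' (ne_of_gt h2)
        · exact h'
      have hz : y i + d i / (σ i - s) = 0 :=
        pow_eq_zero_iff (by norm_num : (2:ℕ) ≠ 0) |>.1 hsq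
      rw [neg_div]
      linarith
    refine ⟨hyB, ?_⟩
    have hBsum : ∑ i ∈ B, y i * y i = R := by
      rw [hR_def]
      apply Finset.sum_congr rfl
      intro i hi
      rw [hyB i ((hmemB i).1 hi), div_mul_div_comm, neg_mul_neg, ← pow_two, ← pow_two]
    have hAsq : ∑ i ∈ A, y i ^ 2 = ∑ i ∈ A, y i * y i := by
      apply Finset.sum_congr rfl
      intro i _
      rw [pow_two]
    have := hsplit (fun i => y i * y i)
    rw [hAsq]
    rw [hT_def] at hT1
    rw [this, hBsum] at hT1
    linarith
  · rintro ⟨hyB, hsum⟩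
    have hBsum : ∑ i ∈ B, y i * y i = R := by
      rw [hR_def]
      apply Finset.sum_congr rfl
      intro i hi
      rw [hyB i ((hmemB i).1 hi), div_mul_div_comm, neg_mul_neg, ← pow_two, ← pow_two]
    have hAsq : ∑ i ∈ A, y i * y i = ∑ i ∈ A, y i ^ 2 := by
      apply Finset.sum_congr rfl
      intro i _
      rw [pow_two]
    have hT1 : ∑ i, y i * y i = 1 := by
      rw [hsplit (fun i => y i * y i), hBsum, hAsq, hsum]
      ring
    refine ⟨le_of_eq hT1, ?_⟩
    intro x hx
    have hval : (1 / 2) * ∑ i, σ i * y i ^ 2 + ∑ i, d i * y i = m := by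
      rw [hiden y, hT1]
      have hP0 : ∑ i ∈ B, (σ i - s) / 2 * (y i + d i / (σ i - s)) ^ 2 = 0 := by
        apply Finset.sum_eq_zero
        intro i hi
        rw [hyB i ((hmemB i).1 hi)]
        ring
      rw [hP0, hm_def]
      ring
    rw [hval]
    exact hlow x hx
end

section
/- Let σ_1 = … = σ_k < σ_{k+1} ≤ … ≤ σ_n with σ_1 < 0, let d ∈ R^n, and let Σ = diag(σ_1, …, σ_n). If k ≥ 2, or if k = 1 and d_1 = 0, then the problem of minimizing (1/2) y^T Σ y + d^T y over {y ∈ R^n : y^T y ≤ 1} has no local minimizer that is not a global minimizer. Otherwise (k = 1 and d_1 ≠ 0), there is at most one local non-global minimizer ȳ, and its associated Lagrange multiplier μ̄ (i.e., (Σ + μ̄ I_n) ȳ + d = 0 and ȳ^T ȳ = 1) satisfies μ̄ ∈ (max{−σ_2, 0}, −σ_1), φ(μ̄) = 0 and φ'(μ̄) ≥ 0, where φ(μ) = Σ_{i=1}^n d_i^2/(σ_i + μ)^2 − 1. -/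
/-!
If `y` is a local minimizer on the unit sphere, reflecting `y` in the hyperplane orthogonal to a
direction `v` keeps it on the sphere, and the reflected point tends to `y` as `v` tends to a
tangent direction. Expanding the objective along these reflections gives the first-order
condition `(Σ + μ I) y + d = 0` and the second-order condition `zᵀ (Σ + μ I) z ≥ 0` for `z ⊥ y`.
If `σᵢ + μ ≥ 0` for all `i` the point is a global minimizer. Otherwise `σ₁ + μ < 0 < σⱼ + μ` for
every `j ≠ 1`, which is impossible when `σ₁` is repeated or `d₁ = 0`. For a local non-global
minimizer, the second-order condition in the tangent direction
`(Σ + μ I)⁻¹ y - (s / y₁) e₁`, with `s = yᵀ (Σ + μ I)⁻¹ y`, gives `φ'(μ) ≥ 0`. Since `φ` is strictly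
convex on `(-σ₂, -σ₁)`, it has at most one zero there with `φ' ≥ 0`; this determines `μ`, and
`y = -(Σ + μ I)⁻¹ d`.
-/

open Set Filter Topology

namespace TrustRegion

variable {ι : Type*} [Fintype ι]

noncomputable def trsObjective (σ d y : ι → ℝ) : ℝ :=
  (1 / 2) * ∑ i, σ i * y i ^ 2 + ∑ i, d i * y i

def diagQuad (a v : ι → ℝ) : ℝ :=
  ∑ i, a i * v i ^ 2

noncomputable def secular (σ d : ι → ℝ) (μ : ℝ) : ℝ :=
  ∑ i, d i ^ 2 / (σ i + μ) ^ 2 - 1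

lemma diagQuad_smul (a v : ι → ℝ) (c : ℝ) : diagQuad a (c • v) = c ^ 2 * diagQuad a v := by
  simp only [diagQuad, Finset.mul_sum, Pi.smul_apply, smul_eq_mul]
  exact Finset.sum_congr rfl fun i _ => by ring

lemma diagQuad_nonneg {a : ι → ℝ} (ha : ∀ i, 0 ≤ a i) (v : ι → ℝ) : 0 ≤ diagQuad a v :=
  Finset.sum_nonneg fun i _ => mul_nonneg (ha i) (sq_nonneg _)

lemma diagQuad_add_single [DecidableEq ι] (a u : ι → ℝ) (i : ι) (c : ℝ) :
    diagQuad a (u + Pi.single i c) = diagQuad a u + a i * (2 * u i * c + c ^ 2) := by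
  rw [← sub_eq_iff_eq_add', diagQuad, diagQuad, ← Finset.sum_sub_distrib,
    Finset.sum_eq_single i (fun j _ hj => by simp [hj]) (by simp)]
  simp only [Pi.add_apply, Pi.single_eq_same]
  ring

lemma diagQuad_single [DecidableEq ι] (a : ι → ℝ) (i : ι) (c : ℝ) :
    diagQuad a (Pi.single i c) = a i * c ^ 2 := by
  simpa [diagQuad] using diagQuad_add_single a 0 i c

lemma continuous_diagQuad (a : ι → ℝ) : Continuous (diagQuad a) := by
  unfold diagQuad
  fun_prop

lemma trsObjective_sub (σ d x y : ι → ℝ) (μ : ℝ) :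
    trsObjective σ d x - trsObjective σ d y =
      (fun i => (σ i + μ) * y i + d i) ⬝ᵥ (x - y) + (1 / 2) * diagQuad (σ · + μ) (x - y)
        + μ / 2 * (y ⬝ᵥ y - x ⬝ᵥ x) := by
  simp only [trsObjective, diagQuad, dotProduct, Finset.mul_sum, ← Finset.sum_add_distrib,
    ← Finset.sum_sub_distrib, Pi.sub_apply]
  exact Finset.sum_congr rfl fun i _ => by ring

lemma trsObjective_sub_of_stationary {σ d y : ι → ℝ} {μ : ℝ}
    (hst : ∀ i, (σ i + μ) * y i + d i = 0) (x : ι → ℝ) :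
    trsObjective σ d x - trsObjective σ d y =
      (1 / 2) * diagQuad (σ · + μ) (x - y) + μ / 2 * (y ⬝ᵥ y - x ⬝ᵥ x) := by
  rw [trsObjective_sub σ d x y μ, show (fun i => (σ i + μ) * y i + d i) = 0 from funext hst,
    zero_dotProduct, zero_add]

lemma trsObjective_add_add_sub (σ d y w : ι → ℝ) :
    trsObjective σ d (y + w) + trsObjective σ d (y - w) =
      2 * trsObjective σ d y + diagQuad σ w := by
  simp only [trsObjective, diagQuad, Finset.mul_sum, ← Finset.sum_add_distrib, Pi.add_apply,
    Pi.sub_apply]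
  exact Finset.sum_congr rfl fun i _ => by ring

lemma trsObjective_le_of_stationary {σ d y : ι → ℝ} {μ : ℝ}
    (hst : ∀ i, (σ i + μ) * y i + d i = 0) (hy : y ⬝ᵥ y = 1) (hμ : 0 ≤ μ)
    (hM : ∀ i, 0 ≤ σ i + μ) {x : ι → ℝ} (hx : x ⬝ᵥ x ≤ 1) :
    trsObjective σ d y ≤ trsObjective σ d x := by
  have := trsObjective_sub_of_stationary hst x
  have := diagQuad_nonneg hM (x - y)
  nlinarith

/-- For `v = 0` this is `y`, as division by zero gives `0`. -/
noncomputable def reflect (y v : ι → ℝ) : ι → ℝ :=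
  y - (2 * (y ⬝ᵥ v) / (v ⬝ᵥ v)) • v

lemma dotProduct_reflect_self (y v : ι → ℝ) : reflect y v ⬝ᵥ reflect y v = y ⬝ᵥ y := by
  rcases eq_or_ne (v ⬝ᵥ v) 0 with hv | hv
  · simp [reflect, hv]
  · simp only [reflect, sub_dotProduct, dotProduct_sub, smul_dotProduct, dotProduct_smul,
      dotProduct_comm v y, smul_eq_mul]
    field_simp
    ring

lemma continuousAt_reflect (y : ι → ℝ) {z : ι → ℝ} (hz : z ≠ 0) : ContinuousAt (reflect y) z := by
  unfold reflect
  fun_prop (disch := exact dotProduct_self_eq_zero.not.2 hz)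

lemma tendsto_reflect {α : Type*} {l : Filter α} {y z : ι → ℝ} {v : α → ι → ℝ}
    (hv : Tendsto v l (𝓝 z)) (hyz : y ⬝ᵥ z = 0) (hz : z ≠ 0) :
    Tendsto (fun t => reflect y (v t)) l (𝓝 y) := by
  have h := (continuousAt_reflect y hz).tendsto.comp hv
  rwa [show reflect y z = y by simp [reflect, hyz]] at h

lemma _root_.IsLocalMinOn.eventually_le_reflect {f : (ι → ℝ) → ℝ} {α : Type*} {l : Filter α}
    {y z : ι → ℝ} {v : α → ι → ℝ} (hmin : IsLocalMinOn f {x | x ⬝ᵥ x ≤ 1} y)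
    (hy : y ⬝ᵥ y = 1) (hv : Tendsto v l (𝓝 z)) (hyz : y ⬝ᵥ z = 0) (hz : z ≠ 0) :
    ∀ᶠ t in l, f y ≤ f (reflect y (v t)) :=
  (tendsto_nhdsWithin_iff.2 ⟨tendsto_reflect hv hyz hz, .of_forall fun t => by
    simp [dotProduct_reflect_self, hy]⟩).eventually hmin

lemma trsObjective_reflect_sub (σ d y v : ι → ℝ) (μ : ℝ) :
    trsObjective σ d (reflect y v) - trsObjective σ d y =
      -(2 * (y ⬝ᵥ v) / (v ⬝ᵥ v)) * ((fun i => (σ i + μ) * y i + d i) ⬝ᵥ v)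
        + (2 * (y ⬝ᵥ v) / (v ⬝ᵥ v)) ^ 2 / 2 * diagQuad (σ · + μ) v := by
  rw [trsObjective_sub σ d _ y μ, dotProduct_reflect_self, sub_self, mul_zero, add_zero,
    reflect, sub_sub_cancel_left, ← neg_smul, dotProduct_smul, diagQuad_smul, smul_eq_mul]
  ring

section Secular

variable {σ d : ι → ℝ}

lemma inv_sq_sub_tangent_pos {x x' : ℝ} (h : 0 < x * x') (hne : x ≠ x') :
    0 < 1 / x' ^ 2 - (1 / x ^ 2 - 2 * (x' - x) / x ^ 3) := by
  have hx : x ≠ 0 := left_ne_zero_of_mul h.ne'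
  have hx' : x' ≠ 0 := right_ne_zero_of_mul h.ne'
  have key : 1 / x' ^ 2 - (1 / x ^ 2 - 2 * (x' - x) / x ^ 3) =
      (x - x') ^ 2 * (x * x + 2 * (x * x')) / (x ^ 4 * x' ^ 2) := by
    field_simp
    ring
  rw [key]
  have := sq_pos_of_ne_zero (sub_ne_zero.2 hne)
  have := mul_self_pos.2 hx
  positivity

lemma hasDerivAt_secular {μ : ℝ} (hM : ∀ i, σ i + μ ≠ 0) :
    HasDerivAt (secular σ d) (-2 * ∑ i, d i ^ 2 / (σ i + μ) ^ 3) μ := by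
  have h : ∀ i ∈ Finset.univ, HasDerivAt (fun t => d i ^ 2 / (σ i + t) ^ 2)
      (-2 * (d i ^ 2 / (σ i + μ) ^ 3)) μ := fun i _ => by
    refine ((hasDerivAt_const μ (d i ^ 2)).fun_div (((hasDerivAt_id μ).const_add (σ i)).pow 2)
      (pow_ne_zero 2 (hM i))).congr_deriv ?_
    simp only [id, Pi.pow_apply]
    field_simp [hM i]
    ring
  rw [Finset.mul_sum]
  exact (HasDerivAt.fun_sum h).sub_const 1

lemma secular_add_mul_deriv_lt {μ μ' : ℝ} (hsign : ∀ i, 0 < (σ i + μ) * (σ i + μ')) {i : ι}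
    (hd : d i ≠ 0) (hne : μ ≠ μ') :
    secular σ d μ + (μ' - μ) * deriv (secular σ d) μ < secular σ d μ' := by
  have hM : ∀ k, σ k + μ ≠ 0 := fun k => left_ne_zero_of_mul (hsign k).ne'
  have key : ∑ k, d k ^ 2 * (1 / (σ k + μ') ^ 2 -
        (1 / (σ k + μ) ^ 2 - 2 * ((σ k + μ') - (σ k + μ)) / (σ k + μ) ^ 3)) =
      ∑ k, d k ^ 2 / (σ k + μ') ^ 2 - ∑ k, d k ^ 2 / (σ k + μ) ^ 2
        + (μ' - μ) * (2 * ∑ k, d k ^ 2 / (σ k + μ) ^ 3) := by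
    rw [Finset.mul_sum, Finset.mul_sum, ← Finset.sum_sub_distrib, ← Finset.sum_add_distrib]
    refine Finset.sum_congr rfl fun k _ => ?_
    ring
  rw [(hasDerivAt_secular hM).deriv, secular, secular]
  suffices 0 < ∑ k, d k ^ 2 * (1 / (σ k + μ') ^ 2 -
      (1 / (σ k + μ) ^ 2 - 2 * ((σ k + μ') - (σ k + μ)) / (σ k + μ) ^ 3)) by linarith
  have hpos : ∀ k, 0 < 1 / (σ k + μ') ^ 2 -
      (1 / (σ k + μ) ^ 2 - 2 * ((σ k + μ') - (σ k + μ)) / (σ k + μ) ^ 3) :=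
    fun k => inv_sq_sub_tangent_pos (hsign k) (by simpa using hne)
  exact Finset.sum_pos' (fun k _ => mul_nonneg (sq_nonneg _) (hpos k).le)
    ⟨i, Finset.mem_univ i, mul_pos (sq_pos_of_ne_zero hd) (hpos i)⟩

lemma eq_of_secular_eq_zero {μ μ' : ℝ} (hsign : ∀ i, 0 < (σ i + μ) * (σ i + μ')) {i : ι}
    (hd : d i ≠ 0) (h : secular σ d μ = 0) (h' : secular σ d μ' = 0)
    (hderiv : 0 ≤ deriv (secular σ d) μ) (hderiv' : 0 ≤ deriv (secular σ d) μ') : μ = μ' := by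
  by_contra hne
  have h₁ := secular_add_mul_deriv_lt hsign hd hne
  have h₂ := secular_add_mul_deriv_lt (fun k => mul_comm (σ k + μ) _ ▸ hsign k) hd (Ne.symm hne)
  rw [h, h'] at h₁ h₂
  rcases lt_or_gt_of_ne hne with hlt | hlt <;> nlinarith

lemma secular_eq_zero_of_stationary {y : ι → ℝ} {μ : ℝ} (hst : ∀ i, (σ i + μ) * y i + d i = 0)
    (hM : ∀ i, σ i + μ ≠ 0) (hy : y ⬝ᵥ y = 1) : secular σ d μ = 0 := by
  rw [secular, sub_eq_zero, ← hy]
  refine Finset.sum_congr rfl fun i _ => ?_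
  rw [eq_neg_of_add_eq_zero_right (hst i)]
  field_simp [hM i]

end Secular

section LocalMin

variable {σ d y : ι → ℝ} {μ : ℝ}

lemma dotProduct_self_eq_one_of_isLocalMinOn [DecidableEq ι] {i : ι} (hσ : σ i < 0)
    (hmin : IsLocalMinOn (trsObjective σ d) {x | x ⬝ᵥ x ≤ 1} y) (hyB : y ⬝ᵥ y ≤ 1) :
    y ⬝ᵥ y = 1 := by
  refine hyB.eq_or_lt.resolve_right fun hlt => ?_
  have hB : {x : ι → ℝ | x ⬝ᵥ x ≤ 1} ∈ 𝓝 y :=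
    mem_of_superset ((isOpen_lt (continuous_id.dotProduct continuous_id)
      continuous_const).mem_nhds hlt) fun x (hx : x ⬝ᵥ x < 1) => hx.le
  have hline : ∀ c : ℝ, Tendsto (fun t : ℝ => y + (c * t) • Pi.single i 1) (𝓝 0) (𝓝 y) :=
    fun c => by simpa using ((by fun_prop : Continuous fun t : ℝ =>
      y + (c * t) • (Pi.single i 1 : ι → ℝ)).tendsto 0)
  have hle := ((hline 1).eventually (hmin.isLocalMin hB)).and
    ((hline (-1)).eventually (hmin.isLocalMin hB))
  obtain ⟨t, ⟨hpos, hneg⟩, ht⟩ := ((hle.filter_mono nhdsWithin_le_nhds).and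
    (self_mem_nhdsWithin : {t : ℝ | t ≠ 0} ∈ 𝓝[≠] 0)).exists
  have := trsObjective_add_add_sub σ d y (t • Pi.single i 1)
  simp only [neg_one_mul, one_mul, neg_smul, ← sub_eq_add_neg, diagQuad_smul,
    diagQuad_single] at this hpos hneg
  nlinarith [sq_pos_of_ne_zero ht]

lemma stationary_of_isLocalMinOn
    (hmin : IsLocalMinOn (trsObjective σ d) {x | x ⬝ᵥ x ≤ 1} y) (hy : y ⬝ᵥ y = 1)
    (hyr : y ⬝ᵥ (fun i => (σ i + μ) * y i + d i) = 0) :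
    ∀ i, (σ i + μ) * y i + d i = 0 := by
  set r : ι → ℝ := fun i => (σ i + μ) * y i + d i
  refine fun i => congrFun (?_ : r = 0) i
  by_contra hr
  set N := r ⬝ᵥ r
  have hN : 0 < N :=
    (dotProduct_self_star_nonneg r).lt_of_ne (Ne.symm (dotProduct_self_eq_zero.not.2 hr))
  -- reflections in the hyperplanes orthogonal to `r + t • y` descend to first order in `t`
  have hv : Tendsto (fun t : ℝ => r + t • y) (𝓝[>] 0) (𝓝 r) := by
    simpa using ((by fun_prop : Continuous fun t : ℝ => r + t • y).tendsto 0).mono_left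
      nhdsWithin_le_nhds
  have hlim : Tendsto (fun t : ℝ => -N + t / (N + t ^ 2) * diagQuad (σ · + μ) (r + t • y))
      (𝓝[>] 0) (𝓝 (-N)) := by
    have hc : Continuous fun t : ℝ => -N + t / (N + t ^ 2) * diagQuad (σ · + μ) (r + t • y) := by
      have := continuous_diagQuad (σ · + μ)
      fun_prop (disch := intro t; positivity)
    simpa using (hc.tendsto 0).mono_left nhdsWithin_le_nhds
  obtain ⟨t, ⟨hle, hneg⟩, ht⟩ := ((hmin.eventually_le_reflect hy hv hyr hr).and
    (hlim.eventually (gt_mem_nhds (neg_neg_of_pos hN)))).and self_mem_nhdsWithin |>.exists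
  have ht : 0 < t := ht
  have hyv : y ⬝ᵥ (r + t • y) = t := by simp [dotProduct_add, dotProduct_smul, hyr, hy]
  have hrv : r ⬝ᵥ (r + t • y) = N := by
    simp [dotProduct_add, dotProduct_smul, dotProduct_comm r y, hyr, N]
  have hvv : (r + t • y) ⬝ᵥ (r + t • y) = N + t ^ 2 := by
    rw [add_dotProduct, smul_dotProduct, hrv, hyv, smul_eq_mul]; ring
  have key : trsObjective σ d (reflect y (r + t • y)) - trsObjective σ d y =
      2 * t / (N + t ^ 2) * (-N + t / (N + t ^ 2) * diagQuad (σ · + μ) (r + t • y)) := by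
    rw [trsObjective_reflect_sub σ d y (r + t • y) μ, hyv, hvv]
    simp only [r] at hrv ⊢
    rw [hrv]
    ring
  nlinarith [mul_neg_of_pos_of_neg (by positivity : 0 < 2 * t / (N + t ^ 2)) hneg]

lemma exists_stationary_of_isLocalMinOn
    (hmin : IsLocalMinOn (trsObjective σ d) {x | x ⬝ᵥ x ≤ 1} y) (hy : y ⬝ᵥ y = 1) :
    ∃ μ : ℝ, ∀ i, (σ i + μ) * y i + d i = 0 := by
  set μ := -((fun i => σ i * y i + d i) ⬝ᵥ y)
  refine ⟨μ, stationary_of_isLocalMinOn hmin hy ?_⟩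
  have : y ⬝ᵥ (fun i => (σ i + μ) * y i + d i) =
      (fun i => σ i * y i + d i) ⬝ᵥ y + μ * (y ⬝ᵥ y) := by
    simp only [dotProduct, Finset.mul_sum, ← Finset.sum_add_distrib]
    exact Finset.sum_congr rfl fun i _ => by ring
  rw [this, hy, mul_one]
  exact add_neg_cancel _

lemma eventually_diagQuad_nonneg_of_isLocalMinOn {α : Type*} {l : Filter α} {z : ι → ℝ}
    {v : α → ι → ℝ}
    (hmin : IsLocalMinOn (trsObjective σ d) {x | x ⬝ᵥ x ≤ 1} y) (hy : y ⬝ᵥ y = 1)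
    (hst : ∀ i, (σ i + μ) * y i + d i = 0) (hv : Tendsto v l (𝓝 z)) (hyz : y ⬝ᵥ z = 0)
    (hz : z ≠ 0) :
    ∀ᶠ t in l, y ⬝ᵥ v t ≠ 0 → 0 ≤ diagQuad (σ · + μ) (v t) := by
  filter_upwards [hmin.eventually_le_reflect hy hv hyz hz] with t ht hyv
  have key := trsObjective_reflect_sub σ d y (v t) μ
  rw [show (fun i => (σ i + μ) * y i + d i) = 0 from funext hst, zero_dotProduct] at key
  have hvv : v t ⬝ᵥ v t ≠ 0 := dotProduct_self_eq_zero.not.2 fun h => by simp [h] at hyv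
  have hc : 0 < (2 * (y ⬝ᵥ v t) / (v t ⬝ᵥ v t)) ^ 2 / 2 := by positivity
  exact nonneg_of_mul_nonneg_right (by linarith) hc

lemma diagQuad_nonneg_of_isLocalMinOn
    (hmin : IsLocalMinOn (trsObjective σ d) {x | x ⬝ᵥ x ≤ 1} y) (hy : y ⬝ᵥ y = 1)
    (hst : ∀ i, (σ i + μ) * y i + d i = 0) {z : ι → ℝ} (hyz : y ⬝ᵥ z = 0) :
    0 ≤ diagQuad (σ · + μ) z := by
  rcases eq_or_ne z 0 with rfl | hz
  · simp [diagQuad]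
  have hv : Tendsto (fun t : ℝ => z + t • y) (𝓝[≠] 0) (𝓝 z) := by
    simpa using ((by fun_prop : Continuous fun t : ℝ => z + t • y).tendsto 0).mono_left
      nhdsWithin_le_nhds
  refine ge_of_tendsto ((continuous_diagQuad _).tendsto z |>.comp hv) ?_
  filter_upwards [eventually_diagQuad_nonneg_of_isLocalMinOn hmin hy hst hv hyz hz,
    self_mem_nhdsWithin] with t h ht
  exact h (by simpa [dotProduct_add, dotProduct_smul, hyz, hy] using ht)

lemma multiplier_pos_of_isLocalMinOn [DecidableEq ι] {i : ι}
    (hmin : IsLocalMinOn (trsObjective σ d) {x | x ⬝ᵥ x ≤ 1} y) (hy : y ⬝ᵥ y = 1)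
    (hst : ∀ i, (σ i + μ) * y i + d i = 0) (hσ : σ i < 0) (hyi : y i ≠ 0) : 0 < μ := by
  set x : ℝ → ι → ℝ := fun s => y + Pi.single i (-(s * y i))
  have hx : Tendsto x (𝓝[>] 0) (𝓝 y) := by
    have hxc : Continuous x := continuous_const.add ((continuous_single i).comp (by fun_prop))
    have h : Tendsto x (𝓝[>] 0) (𝓝 (x 0)) := hxc.continuousWithinAt
    rwa [show x 0 = y by simp [x]] at h
  have hxx : ∀ s, x s ⬝ᵥ x s = 1 - s * (2 - s) * y i ^ 2 := fun s => by
    simp only [x, add_dotProduct, dotProduct_add, dotProduct_single, single_dotProduct,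
      Pi.add_apply, Pi.single_eq_same, hy]
    ring
  have hfx : ∀ s, trsObjective σ d (x s) - trsObjective σ d y = s * y i ^ 2 * (μ + σ i * s / 2) :=
    fun s => by
      rw [trsObjective_sub_of_stationary hst, hxx, hy, add_sub_cancel_left, diagQuad_single]
      ring
  have hxB : ∀ᶠ s in 𝓝[>] (0 : ℝ), x s ∈ {x : ι → ℝ | x ⬝ᵥ x ≤ 1} := by
    filter_upwards [Ioo_mem_nhdsGT two_pos] with s hs
    have := mul_nonneg (mul_nonneg hs.1.le (sub_nonneg.2 hs.2.le)) (sq_nonneg (y i))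
    show x s ⬝ᵥ x s ≤ 1
    linarith [hxx s]
  obtain ⟨s, hle, hs⟩ := ((tendsto_nhdsWithin_iff.2 ⟨hx, hxB⟩).eventually hmin).and
    self_mem_nhdsWithin |>.exists
  have hs : 0 < s := hs
  by_contra! hμ
  have : s * y i ^ 2 * (μ + σ i * s / 2) < 0 :=
    mul_neg_of_pos_of_neg (by positivity) (by nlinarith)
  linarith [hfx s]

lemma add_pos_of_isLocalMinOn [DecidableEq ι] {i j : ι} (hij : i ≠ j)
    (hmin : IsLocalMinOn (trsObjective σ d) {x | x ⬝ᵥ x ≤ 1} y) (hy : y ⬝ᵥ y = 1)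
    (hst : ∀ i, (σ i + μ) * y i + d i = 0) (hMi : σ i + μ < 0) (hyi : y i ≠ 0) :
    0 < σ j + μ := by
  by_contra! hMj
  set v : ℝ → ι → ℝ := fun t => Pi.single j (y i) + Pi.single i (t - y j)
  have hvc : Continuous v := continuous_const.add ((continuous_single i).comp (by fun_prop))
  have hv : Tendsto v (𝓝[≠] 0) (𝓝 (v 0)) := hvc.continuousWithinAt
  have hyv : ∀ t, y ⬝ᵥ v t = y i * t := fun t => by
    simp only [v, dotProduct_add, dotProduct_single]; ring
  have hv0 : v 0 ≠ 0 := fun h => hyi <| by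
    simpa [v, Pi.single_apply, hij] using congrFun h j
  have hQ : ∀ t, diagQuad (σ · + μ) (v t) = (σ j + μ) * y i ^ 2 + (σ i + μ) * (t - y j) ^ 2 :=
    fun t => by simp [v, diagQuad_add_single, diagQuad_single, hij]
  have hne : ∀ᶠ t in 𝓝[≠] (0 : ℝ), t ≠ y j := by
    rcases eq_or_ne (y j) 0 with h | h
    · rw [h]; exact self_mem_nhdsWithin
    · exact nhdsWithin_le_nhds (eventually_ne_nhds h.symm)
  obtain ⟨t, ⟨hle, htj⟩, ht⟩ := ((eventually_diagQuad_nonneg_of_isLocalMinOn hmin hy hst hv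
    (by simp [hyv]) hv0).and hne).and self_mem_nhdsWithin |>.exists
  rw [hQ, hyv] at hle
  have := hle (mul_ne_zero hyi ht)
  nlinarith [sq_pos_of_ne_zero (sub_ne_zero.2 htj), sq_nonneg (y i)]

lemma deriv_secular_nonneg [DecidableEq ι] {i : ι}
    (hmin : IsLocalMinOn (trsObjective σ d) {x | x ⬝ᵥ x ≤ 1} y) (hy : y ⬝ᵥ y = 1)
    (hst : ∀ i, (σ i + μ) * y i + d i = 0) (hM : ∀ k, σ k + μ ≠ 0) (hMi : σ i + μ < 0)
    (hyi : y i ≠ 0) : 0 ≤ deriv (secular σ d) μ := by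
  have hd : ∀ k, d k = -((σ k + μ) * y k) := fun k => eq_neg_of_add_eq_zero_right (hst k)
  set s := ∑ k, y k ^ 2 / (σ k + μ)
  set u : ι → ℝ := fun k => y k / (σ k + μ)
  have hyu : y ⬝ᵥ u = s := Finset.sum_congr rfl fun k _ => by simp only [u]; ring
  have hQu : diagQuad (σ · + μ) u = s := Finset.sum_congr rfl fun k _ => by
    simp only [u]; field_simp [hM k]
  have hQ := diagQuad_nonneg_of_isLocalMinOn hmin hy hst (z := u + Pi.single i (-(s / y i)))
    (by rw [dotProduct_add, dotProduct_single, hyu]; field_simp; ring)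
  rw [diagQuad_add_single, hQu,
    show (σ i + μ) * (2 * u i * -(s / y i) + (-(s / y i)) ^ 2) =
        -2 * s + (σ i + μ) * (s / y i) ^ 2 by
      simp only [u]; field_simp [hM i]] at hQ
  rw [(hasDerivAt_secular hM).deriv,
    Finset.sum_congr rfl fun k _ => show d k ^ 2 / (σ k + μ) ^ 3 = y k ^ 2 / (σ k + μ) by
      rw [hd k]; field_simp [hM k]]
  nlinarith [mul_nonpos_of_nonpos_of_nonneg hMi.le (sq_nonneg (s / y i))]

lemma add_neg_of_not_forall_le {i : ι} (hσ : ∀ k, σ i ≤ σ k) (hneg : σ i < 0)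
    (hst : ∀ i, (σ i + μ) * y i + d i = 0) (hy : y ⬝ᵥ y = 1)
    (hng : ¬∀ x ∈ {x : ι → ℝ | x ⬝ᵥ x ≤ 1}, trsObjective σ d y ≤ trsObjective σ d x) :
    σ i + μ < 0 := by
  by_contra! h
  exact hng fun x hx =>
    trsObjective_le_of_stationary hst hy (by linarith) (fun k => by linarith [hσ k]) hx

theorem forall_le_of_isLocalMinOn [DecidableEq ι] {i : ι} (hσ : ∀ k, σ i ≤ σ k) (hneg : σ i < 0)
    (hdeg : d i = 0 ∨ ∃ j, j ≠ i ∧ σ j = σ i) (hyB : y ⬝ᵥ y ≤ 1)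
    (hmin : IsLocalMinOn (trsObjective σ d) {x | x ⬝ᵥ x ≤ 1} y) :
    ∀ x ∈ {x : ι → ℝ | x ⬝ᵥ x ≤ 1}, trsObjective σ d y ≤ trsObjective σ d x := by
  by_contra hng
  have hy := dotProduct_self_eq_one_of_isLocalMinOn hneg hmin hyB
  obtain ⟨μ, hst⟩ := exists_stationary_of_isLocalMinOn hmin hy
  have hMi := add_neg_of_not_forall_le hσ hneg hst hy hng
  by_cases hyi : y i = 0
  · have := diagQuad_nonneg_of_isLocalMinOn hmin hy hst (z := Pi.single i 1) (by simp [hyi])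
    rw [diagQuad_single] at this
    linarith
  · obtain ⟨j, hji, hσj⟩ := hdeg.resolve_left fun hd =>
      hyi <| (mul_eq_zero.1 (by simpa [hd] using hst i)).resolve_left hMi.ne
    linarith [add_pos_of_isLocalMinOn hji.symm hmin hy hst hMi hyi]

theorem multiplier_mem_of_not_forall_le [DecidableEq ι] {i j : ι} (hij : i ≠ j)
    (hσ : ∀ k, σ i ≤ σ k) (hσj : ∀ k, k ≠ i → σ j ≤ σ k) (hneg : σ i < 0) (hd : d i ≠ 0)
    (hmin : IsLocalMinOn (trsObjective σ d) {x | x ⬝ᵥ x ≤ 1} y)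
    (hng : ¬∀ x ∈ {x : ι → ℝ | x ⬝ᵥ x ≤ 1}, trsObjective σ d y ≤ trsObjective σ d x)
    (hy : y ⬝ᵥ y = 1) (hst : ∀ i, (σ i + μ) * y i + d i = 0) :
    μ ∈ Ioo (max (-σ j) 0) (-σ i) ∧ secular σ d μ = 0 ∧ 0 ≤ deriv (secular σ d) μ := by
  have hMi := add_neg_of_not_forall_le hσ hneg hst hy hng
  have hyi : y i ≠ 0 := fun h => hd (by simpa [h] using hst i)
  have hMj := add_pos_of_isLocalMinOn hij hmin hy hst hMi hyi
  have hM : ∀ k, σ k + μ ≠ 0 := fun k => by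
    rcases eq_or_ne k i with rfl | hk
    · exact hMi.ne
    · linarith [hσj k hk]
  exact ⟨⟨max_lt (by linarith) (multiplier_pos_of_isLocalMinOn hmin hy hst hneg hyi), by linarith⟩,
    secular_eq_zero_of_stationary hst hM hy, deriv_secular_nonneg hmin hy hst hM hMi hyi⟩

theorem eq_of_not_forall_le [DecidableEq ι] {i j : ι} (hij : i ≠ j)
    (hσ : ∀ k, σ i ≤ σ k) (hσj : ∀ k, k ≠ i → σ j ≤ σ k) (hneg : σ i < 0) (hd : d i ≠ 0)
    {y' : ι → ℝ} (hyB : y ⬝ᵥ y ≤ 1) (hyB' : y' ⬝ᵥ y' ≤ 1)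
    (hmin : IsLocalMinOn (trsObjective σ d) {x | x ⬝ᵥ x ≤ 1} y)
    (hmin' : IsLocalMinOn (trsObjective σ d) {x | x ⬝ᵥ x ≤ 1} y')
    (hng : ¬∀ x ∈ {x : ι → ℝ | x ⬝ᵥ x ≤ 1}, trsObjective σ d y ≤ trsObjective σ d x)
    (hng' : ¬∀ x ∈ {x : ι → ℝ | x ⬝ᵥ x ≤ 1}, trsObjective σ d y' ≤ trsObjective σ d x) :
    y = y' := by
  have hy := dotProduct_self_eq_one_of_isLocalMinOn hneg hmin hyB
  have hy' := dotProduct_self_eq_one_of_isLocalMinOn hneg hmin' hyB'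
  obtain ⟨μ, hst⟩ := exists_stationary_of_isLocalMinOn hmin hy
  obtain ⟨μ', hst'⟩ := exists_stationary_of_isLocalMinOn hmin' hy'
  obtain ⟨hμ, h, hderiv⟩ := multiplier_mem_of_not_forall_le hij hσ hσj hneg hd hmin hng hy hst
  obtain ⟨hμ', h', hderiv'⟩ :=
    multiplier_mem_of_not_forall_le hij hσ hσj hneg hd hmin' hng' hy' hst'
  have hsign : ∀ k, 0 < (σ k + μ) * (σ k + μ') := fun k => by
    rcases eq_or_ne k i with rfl | hk
    · exact mul_pos_of_neg_of_neg (by linarith [hμ.2]) (by linarith [hμ'.2])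
    · have := hσj k hk
      have := le_max_left (-σ j) 0
      exact mul_pos (by linarith [hμ.1]) (by linarith [hμ'.1])
  obtain rfl := eq_of_secular_eq_zero hsign hd h h' hderiv hderiv'
  funext k
  exact mul_left_cancel₀ (left_ne_zero_of_mul (hsign k).ne') (by linarith [hst k, hst' k])

end LocalMin

end TrustRegion

open TrustRegion in
/-- Martínez / Lucidi–Palagi–Roma: if `k ≥ 2`, or `k = 1` and `d₁ = 0`, the diagonalized
trust region subproblem has no local non-global minimizer.  Otherwise there is at most
one local non-global minimizer `ȳ`, and its Lagrange multiplier `μ̄` lies in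
`(max{-σ₂,0}, -σ₁)` and satisfies `φ(μ̄) = 0`, `φ'(μ̄) ≥ 0`. -/
theorem stmt_5 {n : ℕ} (hn : 2 ≤ n) (k : ℕ)
    (σ d : Fin n → ℝ) (hmono : Monotone σ)
    (hflat : ∀ i : Fin n, (i : ℕ) < k → σ i = σ ⟨0, by omega⟩)
    (hneg : σ ⟨0, by omega⟩ < 0) :
    let f : (Fin n → ℝ) → ℝ :=
      fun y => (1 / 2) * ∑ i, σ i * y i ^ 2 + ∑ i, d i * y i
    let B : Set (Fin n → ℝ) := {y | ∑ i, y i * y i ≤ 1}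
    let φ : ℝ → ℝ := fun μ => ∑ i, d i ^ 2 / (σ i + μ) ^ 2 - 1
    ((2 ≤ k ∨ (k = 1 ∧ d ⟨0, by omega⟩ = 0)) →
        ∀ y ∈ B, IsLocalMinOn f B y → ∀ x ∈ B, f y ≤ f x) ∧
      ((k = 1 ∧ d ⟨0, by omega⟩ ≠ 0) →
        (∀ y₁ ∈ B, ∀ y₂ ∈ B,
            IsLocalMinOn f B y₁ → ¬(∀ x ∈ B, f y₁ ≤ f x) →
            IsLocalMinOn f B y₂ → ¬(∀ x ∈ B, f y₂ ≤ f x) → y₁ = y₂) ∧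
          ∀ y ∈ B, ∀ μ : ℝ,
            IsLocalMinOn f B y → ¬(∀ x ∈ B, f y ≤ f x) →
            (∀ i, (σ i + μ) * y i + d i = 0) → (∑ i, y i * y i = 1) →
            μ ∈ Set.Ioo (max (-σ ⟨1, by omega⟩) 0) (-σ ⟨0, by omega⟩) ∧
              φ μ = 0 ∧ 0 ≤ deriv φ μ) := by
  intro f B φ
  have h01 : (⟨0, by omega⟩ : Fin n) ≠ ⟨1, by omega⟩ := by simp
  have hσ₀ : ∀ i, σ ⟨0, by omega⟩ ≤ σ i := fun i => hmono (Nat.zero_le i)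
  have hσ₁ : ∀ i, i ≠ ⟨0, by omega⟩ → σ ⟨1, by omega⟩ ≤ σ i := fun i hi =>
    hmono (Nat.one_le_iff_ne_zero.2 fun h => hi (Fin.ext h))
  refine ⟨fun hk y hyB hmin => forall_le_of_isLocalMinOn hσ₀ hneg ?_ hyB hmin,
    fun ⟨_, hd⟩ => ⟨fun y₁ hy₁ y₂ hy₂ hmin₁ hng₁ hmin₂ hng₂ =>
      eq_of_not_forall_le h01 hσ₀ hσ₁ hneg hd hy₁ hy₂ hmin₁ hmin₂ hng₁ hng₂,
    fun y _ μ hmin hng hst hy =>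
      multiplier_mem_of_not_forall_le h01 hσ₀ hσ₁ hneg hd hmin hng hy hst⟩⟩
  rcases hk with hk | ⟨_, hd⟩
  · exact .inr ⟨⟨1, by omega⟩, h01.symm, hflat _ (by simp only; omega)⟩
  · exact .inl hd
end

section
/- Let H ∈ R^{m×p} have linearly independent columns, let g ∈ R^m, and assume there exists u_0 ∈ R^p with H u_0 ≤ g. Then the polyhedron L = {u ∈ R^p : H u ≤ g} is bounded if and only if the optimal value f* of the linear program: minimize e^T H u subject to H u ≤ 0 and ‖u‖_∞ ≤ 1 (where e is the all-ones vector in R^m) is nonnegative. -/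
/-!
Both conditions say that the recession cone `{d | H d ≤ 0}` is trivial. If `L` is bounded, no ray
`u₀ + t d` with `H d ≤ 0` can stay in `L`. Conversely, if the cone is trivial, the total violation
`∑ i, max (H u)ᵢ 0` is continuous, positively homogeneous and positive off the origin, hence at
least `ε ‖u‖`; on `L` it is at most `∑ i, max gᵢ 0`. On the LP side, `eᵀ H u ≤ 0` on the feasible
set, with equality only where `H u = 0`, i.e. (by injectivity of `H`) only at `u = 0`.
-/

open Matrix Bornology Metric

section NormedSpace

variable {E : Type*} [NormedAddCommGroup E] [NormedSpace ℝ E]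

theorem eq_zero_of_isBounded_of_forall_add_smul_mem {s : Set E} (hs : IsBounded s) {x d : E}
    (hray : ∀ t : ℝ, 0 ≤ t → x + t • d ∈ s) : d = 0 := by
  obtain ⟨C, hC⟩ := isBounded_iff_forall_norm_le.mp hs
  by_contra hd
  have hd' : 0 < ‖d‖ := norm_pos_iff.mpr hd
  have hxC : ‖x‖ ≤ C := by simpa using hC _ (hray 0 le_rfl)
  set t := (C + ‖x‖ + 1) / ‖d‖
  have ht : 0 ≤ t := div_nonneg (by linarith [norm_nonneg x]) hd'.le
  have hnorm : ‖t • d‖ = C + ‖x‖ + 1 := by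
    rw [norm_smul, Real.norm_of_nonneg ht, div_mul_cancel₀ _ hd'.ne']
  have hle : ‖t • d‖ ≤ C + ‖x‖ := calc
    ‖t • d‖ = ‖(x + t • d) - x‖ := by rw [add_sub_cancel_left]
    _ ≤ ‖x + t • d‖ + ‖x‖ := norm_sub_le _ _
    _ ≤ C + ‖x‖ := by gcongr; exact hC _ (hray t ht)
  linarith

/-- The multiple is the minimum of `f` on the compact unit sphere. -/
theorem exists_pos_mul_norm_le [FiniteDimensional ℝ E] {f : E → ℝ} (hf : Continuous f)
    (hsmul : ∀ t : ℝ, 0 ≤ t → ∀ x, f (t • x) = t * f x) (hpos : ∀ x, x ≠ 0 → 0 < f x) :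
    ∃ ε > 0, ∀ x, ε * ‖x‖ ≤ f x := by
  have hf0 : f 0 = 0 := by simpa using hsmul 0 le_rfl 0
  rcases subsingleton_or_nontrivial E with hE | hE
  · exact ⟨1, one_pos, fun x => by simp [Subsingleton.elim x 0, hf0]⟩
  obtain ⟨x₀, hx₀, hmin⟩ := (isCompact_sphere (0 : E) 1).exists_isMinOn
    (NormedSpace.sphere_nonempty.mpr zero_le_one) hf.continuousOn
  refine ⟨f x₀, hpos x₀ (by rintro rfl; simp at hx₀), fun x => ?_⟩
  rcases eq_or_ne x 0 with rfl | hx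
  · simp [hf0]
  have hunit : ‖x‖⁻¹ • x ∈ sphere (0 : E) 1 :=
    mem_sphere_zero_iff_norm.mpr (norm_smul_inv_norm (𝕜 := ℝ) hx)
  calc f x₀ * ‖x‖ ≤ f (‖x‖⁻¹ • x) * ‖x‖ := by gcongr; exact hmin hunit
    _ = f x := by
      rw [hsmul _ (by positivity), mul_comm, ← mul_assoc,
        mul_inv_cancel₀ (norm_ne_zero_iff.mpr hx), one_mul]

end NormedSpace

section Polyhedron

variable {E ι : Type*} [NormedAddCommGroup E] [NormedSpace ℝ E] (A : E →ₗ[ℝ] ι → ℝ)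

theorem eq_zero_of_isBounded_setOf_le {g : ι → ℝ} (hbdd : IsBounded {u | A u ≤ g})
    {u₀ : E} (hu₀ : A u₀ ≤ g) {d : E} (hd : A d ≤ 0) : d = 0 := by
  refine eq_zero_of_isBounded_of_forall_add_smul_mem (x := u₀) hbdd fun t ht => ?_
  calc A (u₀ + t • d) = A u₀ + t • A d := by rw [map_add, map_smul]
    _ ≤ g + 0 := add_le_add hu₀ (smul_nonpos_of_nonneg_of_nonpos ht hd)
    _ = g := add_zero g

theorem isBounded_setOf_le [FiniteDimensional ℝ E] [Fintype ι] (hrec : ∀ d, A d ≤ 0 → d = 0)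
    (g : ι → ℝ) :
    IsBounded {u | A u ≤ g} := by
  set f : E → ℝ := fun u => ∑ i, max (A u i) 0
  have hf : Continuous f :=
    continuous_finsetSum _ fun i _ =>
      ((continuous_apply i).comp A.continuous_of_finiteDimensional).max continuous_const
  have hsmul : ∀ t : ℝ, 0 ≤ t → ∀ u, f (t • u) = t * f u := fun t ht u => by
    simp only [f, map_smul, Pi.smul_apply, smul_eq_mul, Finset.mul_sum, mul_max_of_nonneg _ _ ht,
      mul_zero]
  have hpos : ∀ u, u ≠ 0 → 0 < f u := fun u hu => by
    refine (Finset.sum_nonneg fun i _ => le_max_right _ _).lt_of_ne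
      fun hsum => hu (hrec u fun i => ?_)
    have := (Finset.sum_eq_zero_iff_of_nonneg fun i _ => le_max_right (A u i) 0).mp hsum.symm i
      (Finset.mem_univ i)
    exact (le_max_left _ _).trans this.le
  obtain ⟨ε, hε, hf_ge⟩ := exists_pos_mul_norm_le hf hsmul hpos
  refine isBounded_iff_forall_norm_le.mpr ⟨(∑ i, max (g i) 0) / ε, fun u hu => ?_⟩
  rw [le_div_iff₀' hε]
  exact (hf_ge u).trans (Finset.sum_le_sum fun i _ => max_le_max (hu i) le_rfl)

theorem isBounded_setOf_le_iff [FiniteDimensional ℝ E] [Fintype ι] {g : ι → ℝ} {u₀ : E}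
    (hu₀ : A u₀ ≤ g) :
    IsBounded {u | A u ≤ g} ↔ ∀ d, A d ≤ 0 → d = 0 :=
  ⟨fun hbdd _ => eq_zero_of_isBounded_setOf_le A hbdd hu₀, fun hrec => isBounded_setOf_le A hrec g⟩

theorem zero_le_sInf_sum_iff [FiniteDimensional ℝ E] [Fintype ι] (hA : Function.Injective A) :
    0 ≤ sInf {v | ∃ u, A u ≤ 0 ∧ ‖u‖ ≤ 1 ∧ v = ∑ i, A u i} ↔ ∀ d, A d ≤ 0 → d = 0 := by
  set S := {v | ∃ u, A u ≤ 0 ∧ ‖u‖ ≤ 1 ∧ v = ∑ i, A u i}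
  have hcont : Continuous fun u => ∑ i, A u i :=
    continuous_finsetSum _ fun i _ => (continuous_apply i).comp A.continuous_of_finiteDimensional
  have hS : S ⊆ (fun u => ∑ i, A u i) '' closedBall 0 1 := by
    rintro _ ⟨u, -, hu, rfl⟩
    exact ⟨u, mem_closedBall_zero_iff.mpr hu, rfl⟩
  -- `sInf` of a set that is not bounded below is `0`, so this is not a formality.
  have hbdd : BddBelow S := ((isCompact_closedBall 0 1).image hcont).bddBelow.mono hS
  rw [le_csInf_iff hbdd ⟨0, 0, by simp⟩]
  constructor
  · intro hS0 d hd
    rcases eq_or_ne d 0 with hd0 | hd0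
    · exact hd0
    set w := ‖d‖⁻¹ • d
    have hw : A w ≤ 0 := by
      rw [map_smul]
      exact smul_nonpos_of_nonneg_of_nonpos (by positivity) hd
    have hw1 : ‖w‖ ≤ 1 := (norm_smul_inv_norm (𝕜 := ℝ) hd0).le
    have hsum := le_antisymm (Finset.sum_nonpos fun i _ => hw i) (hS0 _ ⟨w, hw, hw1, rfl⟩)
    have hAw : A w = 0 := funext fun i =>
      (Finset.sum_eq_zero_iff_of_nonpos fun i _ => hw i).mp hsum i (Finset.mem_univ i)
    have : w = 0 := hA (hAw.trans (map_zero A).symm)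
    simp [w, hd0] at this
  · rintro hrec _ ⟨u, hu, -, rfl⟩
    simp [hrec u hu]

end Polyhedron

/-- For `H` with linearly independent columns and a feasible point `u₀` of
`L = {u : H u ≤ g}`, the polyhedron `L` is bounded iff the optimal value of the
linear program `min eᵀHu  s.t.  Hu ≤ 0, ‖u‖∞ ≤ 1` is nonnegative. -/
theorem stmt_8 {m p : ℕ} (H : Matrix (Fin m) (Fin p) ℝ) (g : Fin m → ℝ)
    (hindep : LinearIndependent ℝ (fun j : Fin p => (fun i : Fin m => H i j)))
    (u₀ : Fin p → ℝ) (hu₀ : ∀ i, H.mulVec u₀ i ≤ g i) :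
    Bornology.IsBounded {u : Fin p → ℝ | ∀ i, H.mulVec u i ≤ g i} ↔
      0 ≤ sInf {v : ℝ | ∃ u : Fin p → ℝ,
        (∀ i, H.mulVec u i ≤ 0) ∧ (∀ j, |u j| ≤ 1) ∧ v = ∑ i, H.mulVec u i} := by
  have hunit : ∀ u : Fin p → ℝ, (∀ j, |u j| ≤ 1) ↔ ‖u‖ ≤ 1 := fun u => by
    simp only [pi_norm_le_iff_of_nonneg zero_le_one, Real.norm_eq_abs]
  simp_rw [hunit]
  exact (isBounded_setOf_le_iff H.mulVecLin hu₀).trans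
    (zero_le_sInf_sum_iff H.mulVecLin (mulVec_injective_iff.mpr hindep)).symm
end

section
/- Let Q be a real symmetric n×n matrix with smallest eigenvalue λ_min(Q) < 0, let c, a_1, …, a_m ∈ R^n and b ∈ R^m, and assume the feasible set {x : x^T x ≤ 1, a_i^T x ≤ b_i, i = 1, …, m} has a strictly feasible point (Slater condition). If the n×(n+m) matrix [Q − λ_min(Q) I_n, a_1, …, a_m] obtained by appending the columns a_1, …, a_m to Q − λ_min(Q) I_n has rank at most n − 1, then v(T_m) = v(P): the optimal value of minimizing (1/2) x^T Q x + c^T x over {x : x^T x ≤ 1, a_i^T x ≤ b_i ∀i} equals the optimal value of its semidefinite relaxation: minimize (1/2) trace(Q X) + c^T x over pairs (X, x) with X an n×n symmetric matrix, subject to trace(X) ≤ 1, a_i^T x ≤ b_i for i = 1, …, m, and the (n+1)×(n+1) block matrix [[X, x],[x^T, 1]] positive semidefinite. -/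
/-!
By the rank condition some `v ≠ 0` lies in the kernel of `Q - λI` and of every `aᵢᵀ`: an
eigenvector for `λ = λ_min(Q)` along which the linear constraints are constant. If `(X, x)` is
feasible for the relaxation, the Schur complement gives `X - xxᵀ ⪰ 0`, and
`tr((Q - λI)(X - xxᵀ)) ≥ 0` together with `tr X ≤ 1` and `λ < 0` gives
`tr(QX) ≥ xᵀQx + λ(1 - ‖x‖²)`. Choose `t` with `‖x + tv‖ = 1` and `t (c ⬝ v) ≤ 0`; then
`f(x + tv) = f(x) + (λ/2)(1 - ‖x‖²) + t (c ⬝ v)` is at most the relaxation's value at `(X, x)`.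
Conversely `x ↦ (xxᵀ, x)` embeds `(T_m)` into the relaxation, so each value set dominates the
other and their infima agree.
-/

open Matrix

-- The two roots have product `-e / p ≤ 0`, so one of them has the sign we want.
theorem exists_mul_sq_add_eq_and_mul_nonpos {p e : ℝ} (hp : 0 < p) (he : 0 ≤ e) (b d : ℝ) :
    ∃ t : ℝ, p * t ^ 2 + 2 * b * t = e ∧ t * d ≤ 0 := by
  obtain ⟨r, hr0, hr⟩ : ∃ r : ℝ, 0 ≤ r ∧ r ^ 2 = b ^ 2 + p * e :=
    ⟨_, Real.sqrt_nonneg _, Real.sq_sqrt (by positivity)⟩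
  obtain ⟨hbr, hrb⟩ := abs_le.mp (abs_le_of_sq_le_sq (a := b) (by nlinarith) hr0)
  rcases le_total 0 d with hd | hd
  · refine ⟨(-b - r) / p, ?_, mul_nonpos_of_nonpos_of_nonneg ?_ hd⟩
    · field_simp
      linear_combination hr
    · exact div_nonpos_of_nonpos_of_nonneg (by linarith) hp.le
  · refine ⟨(r - b) / p, ?_, mul_nonpos_of_nonneg_of_nonpos ?_ hd⟩
    · field_simp
      linear_combination hr
    · exact div_nonneg (by linarith) hp.le

namespace Matrix

variable {ι κ : Type*} [Fintype ι]

theorem exists_ne_zero_vecMul_eq_zero_of_rank_lt {K : Type*} [Field K] [Fintype κ]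
    (M : Matrix ι κ K) (h : M.rank < Fintype.card ι) : ∃ v ≠ 0, v ᵥ* M = 0 := by
  by_contra! hinj
  have : Function.Injective Mᵀ.mulVecLin := by
    rw [← LinearMap.ker_eq_bot, LinearMap.ker_eq_bot']
    intro v hv
    by_contra hv0
    exact hinj v hv0 (by simpa [mulVec_transpose] using hv)
  rw [← rank_transpose, rank, LinearMap.finrank_range_of_inj this,
    Module.finrank_fintype_fun_eq_card] at h
  exact h.false

theorem IsSymm.exists_mulVec_eq_smul_of_rank_fromCols_lt {K : Type*} [Field K] [Fintype κ]
    [DecidableEq ι] {Q : Matrix ι ι K} (hQ : Q.IsSymm) {lam : K} {A : Matrix ι κ K}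
    (h : (fromCols (Q - lam • 1) A).rank < Fintype.card ι) :
    ∃ v ≠ 0, Q *ᵥ v = lam • v ∧ v ᵥ* A = 0 := by
  obtain ⟨v, hv0, hv⟩ := exists_ne_zero_vecMul_eq_zero_of_rank_lt _ h
  rw [vecMul_fromCols] at hv
  have hQv : v ᵥ* (Q - lam • 1) = 0 := funext fun i => congrFun hv (.inl i)
  refine ⟨v, hv0, ?_, funext fun l => congrFun hv (.inr l)⟩
  rwa [vecMul_sub, ← mulVec_transpose, hQ.eq, vecMul_smul, vecMul_one, sub_eq_zero] at hQv

theorem posSemidef_sub_smul_one [DecidableEq ι] {Q : Matrix ι ι ℝ} (hQ : Q.IsSymm) {lam : ℝ}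
    (h : ∀ x, lam * (x ⬝ᵥ x) ≤ x ⬝ᵥ Q *ᵥ x) : (Q - lam • 1).PosSemidef := by
  refine .of_dotProduct_mulVec_nonneg ?_ fun x => ?_
  · rw [isHermitian_iff_isSymm]
    exact hQ.sub (isSymm_one.smul lam)
  · simpa [sub_mulVec, smul_mulVec, dotProduct_smul] using h x

open scoped MatrixOrder ComplexOrder in
theorem PosSemidef.trace_mul_nonneg {𝕜 : Type*} [RCLike 𝕜] {A B : Matrix ι ι 𝕜}
    (hA : A.PosSemidef) (hB : B.PosSemidef) : 0 ≤ (A * B).trace := by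
  classical
  obtain ⟨C, rfl⟩ := CStarAlgebra.nonneg_iff_eq_star_mul_self.mp hA.nonneg
  rw [Matrix.mul_assoc, trace_mul_comm]
  exact (hB.mul_mul_conjTranspose_same C).trace_nonneg

theorem trace_mul_vecMulVec {R : Type*} [CommSemiring R] (A : Matrix ι ι R) (a b : ι → R) :
    (A * vecMulVec a b).trace = b ⬝ᵥ A *ᵥ a := by
  simp only [trace, diag, mul_apply, vecMulVec_apply, dotProduct, mulVec, Finset.mul_sum]
  exact Finset.sum_congr rfl fun i _ => Finset.sum_congr rfl fun j _ => by ring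

theorem posSemidef_fromBlocks_replicateCol_iff [Unique κ] [DecidableEq κ] [DecidableEq ι]
    (X : Matrix ι ι ℝ) (x : ι → ℝ) :
    (fromBlocks X (replicateCol κ x) (replicateRow κ x) 1).PosSemidef ↔
      (X - vecMulVec x x).PosSemidef := by
  have : Invertible (1 : Matrix κ κ ℝ) := invertibleOne
  simpa [vecMulVec_eq κ] using PosDef.fromBlocks₂₂ X (replicateCol κ x) PosDef.one

theorem dotProduct_self_le_trace_of_posSemidef_sub {X : Matrix ι ι ℝ} {x : ι → ℝ}
    (hX : (X - vecMulVec x x).PosSemidef) : x ⬝ᵥ x ≤ X.trace := by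
  have := hX.trace_nonneg
  rwa [trace_sub, trace_vecMulVec, sub_nonneg] at this

theorem IsSymm.dotProduct_mulVec_comm {R : Type*} [CommSemiring R] {Q : Matrix ι ι R}
    (hQ : Q.IsSymm) (x y : ι → R) : x ⬝ᵥ Q *ᵥ y = y ⬝ᵥ Q *ᵥ x := by
  rw [dotProduct_mulVec, ← mulVec_transpose, hQ.eq, dotProduct_comm]

theorem IsSymm.dotProduct_mulVec_add_smul {R : Type*} [CommRing R] {Q : Matrix ι ι R}
    (hQ : Q.IsSymm) {v : ι → R} {lam : R} (hv : Q *ᵥ v = lam • v) (x : ι → R) (t : R) :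
    (x + t • v) ⬝ᵥ Q *ᵥ (x + t • v) =
      x ⬝ᵥ Q *ᵥ x + lam * (2 * t * (x ⬝ᵥ v) + t ^ 2 * (v ⬝ᵥ v)) := by
  have hvx : v ⬝ᵥ Q *ᵥ x = lam * (x ⬝ᵥ v) := by
    rw [hQ.dotProduct_mulVec_comm, hv, dotProduct_smul, smul_eq_mul]
  rw [mulVec_add, mulVec_smul, hv]
  simp only [dotProduct_add, add_dotProduct, dotProduct_smul, smul_dotProduct, smul_eq_mul, hvx]
  ring

theorem dotProduct_mulVec_add_le_trace_mul [DecidableEq ι] {Q X : Matrix ι ι ℝ} {x : ι → ℝ}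
    {lam : ℝ} (hlam : lam ≤ 0) (hQ : (Q - lam • 1).PosSemidef)
    (hX : (X - vecMulVec x x).PosSemidef) (htr : X.trace ≤ 1) :
    x ⬝ᵥ Q *ᵥ x + lam * (1 - x ⬝ᵥ x) ≤ (Q * X).trace := by
  have h := hQ.trace_mul_nonneg hX
  simp only [sub_mul, mul_sub, smul_mul, Matrix.one_mul, trace_sub, trace_smul,
    trace_mul_vecMulVec, trace_vecMulVec, smul_eq_mul] at h
  nlinarith

theorem IsSymm.exists_dotProduct_self_eq_one_and_le [DecidableEq ι] {Q X : Matrix ι ι ℝ}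
    (hQ : Q.IsSymm) {lam : ℝ} (hlam : lam ≤ 0) (hQlam : (Q - lam • 1).PosSemidef) {v : ι → ℝ}
    (hv0 : v ≠ 0) (hv : Q *ᵥ v = lam • v) (c x : ι → ℝ) (hX : (X - vecMulVec x x).PosSemidef)
    (htr : X.trace ≤ 1) :
    ∃ t : ℝ, (x + t • v) ⬝ᵥ (x + t • v) = 1 ∧
      1 / 2 * ((x + t • v) ⬝ᵥ Q *ᵥ (x + t • v)) + c ⬝ᵥ (x + t • v) ≤
        1 / 2 * (Q * X).trace + c ⬝ᵥ x := by
  have hxx : x ⬝ᵥ x ≤ 1 := (dotProduct_self_le_trace_of_posSemidef_sub hX).trans htr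
  have hvv : 0 < v ⬝ᵥ v := by simpa using dotProduct_star_self_pos_iff.mpr hv0
  obtain ⟨t, ht, htc⟩ :=
    exists_mul_sq_add_eq_and_mul_nonpos hvv (sub_nonneg.2 hxx) (x ⬝ᵥ v) (c ⬝ᵥ v)
  refine ⟨t, ?_, ?_⟩
  · simp only [dotProduct_add, add_dotProduct, dotProduct_smul, smul_dotProduct, smul_eq_mul,
      dotProduct_comm v x]
    linarith
  · rw [hQ.dotProduct_mulVec_add_smul hv, dotProduct_add, dotProduct_smul, smul_eq_mul]
    have := dotProduct_mulVec_add_le_trace_mul hlam hQlam hX htr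
    nlinarith

end Matrix

theorem stmt_14_general {n m : ℕ} (Q : Matrix (Fin n) (Fin n) ℝ) (hQsymm : Q.IsSymm)
    (c : Fin n → ℝ) (a : Fin m → (Fin n → ℝ)) (b : Fin m → ℝ)
    (lam : ℝ) (hlam_neg : lam < 0)
    (hlam_ev : ∃ v : Fin n → ℝ, v ≠ 0 ∧ Q.mulVec v = lam • v)
    (hlam_min : ∀ x : Fin n → ℝ, lam * (x ⬝ᵥ x) ≤ x ⬝ᵥ Q.mulVec x)
    (hrank : Matrix.rank (Matrix.of fun (i : Fin n) (j : Fin n ⊕ Fin m) =>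
        Sum.elim (fun j' : Fin n => (Q - lam • 1) i j') (fun l : Fin m => a l i) j)
      ≤ n - 1) :
    sInf {v : ℝ | ∃ x : Fin n → ℝ,
        x ⬝ᵥ x ≤ 1 ∧ (∀ i, a i ⬝ᵥ x ≤ b i) ∧
        v = (1 / 2) * (x ⬝ᵥ Q.mulVec x) + c ⬝ᵥ x} =
      sInf {v : ℝ | ∃ (X : Matrix (Fin n) (Fin n) ℝ) (x : Fin n → ℝ),
        X.IsSymm ∧ X.trace ≤ 1 ∧ (∀ i, a i ⬝ᵥ x ≤ b i) ∧
        (Matrix.fromBlocks X (Matrix.replicateCol (Fin 1) x) (Matrix.replicateRow (Fin 1) x) 1).PosSemidef ∧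
        v = (1 / 2) * (Q * X).trace + c ⬝ᵥ x} := by
  have hn : 0 < n := by
    obtain ⟨u, hu, -⟩ := hlam_ev
    exact Nat.pos_of_ne_zero fun hn => hu (by subst hn; exact Subsingleton.elim _ _)
  obtain ⟨v, hv0, hQv, hav⟩ := hQsymm.exists_mulVec_eq_smul_of_rank_fromCols_lt
    (A := (of a)ᵀ) (hrank.trans_lt (by simpa using hn))
  refine csInf_eq_csInf_of_forall_exists_le ?_ ?_
  · rintro _ ⟨x, hx, hax, rfl⟩
    refine ⟨_, ⟨vecMulVec x x, x, transpose_vecMulVec x x, by rwa [trace_vecMulVec], hax,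
      (posSemidef_fromBlocks_replicateCol_iff _ _).mpr (by rw [sub_self]; exact .zero), rfl⟩,
      by rw [trace_mul_vecMulVec]⟩
  · rintro _ ⟨X, x, -, hXtr, hax, hP, rfl⟩
    obtain ⟨t, ht, hle⟩ := hQsymm.exists_dotProduct_self_eq_one_and_le hlam_neg.le
      (posSemidef_sub_smul_one hQsymm hlam_min) hv0 hQv c x
      ((posSemidef_fromBlocks_replicateCol_iff _ _).mp hP) hXtr
    refine ⟨_, ⟨x + t • v, ht.le, fun i => ?_, rfl⟩, hle⟩
    have hai : a i ⬝ᵥ v = 0 := by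
      rw [vecMul_transpose] at hav
      exact congrFun hav i
    rw [dotProduct_add, dotProduct_smul, hai, smul_zero, add_zero]
    exact hax i

/-- Improved dimension condition [NewDC] for exactness of the SDP relaxation of the
extended trust region subproblem `(T_m)`: if `rank [Q - λ_min(Q) Iₙ, a₁, …, a_m] ≤ n - 1`
and Slater's condition holds, then `v(T_m) = v(P)`. -/
theorem stmt_14 {n m : ℕ} (Q : Matrix (Fin n) (Fin n) ℝ) (hQsymm : Q.IsSymm)
    (c : Fin n → ℝ) (a : Fin m → (Fin n → ℝ)) (b : Fin m → ℝ)
    (lam : ℝ) (hlam_neg : lam < 0)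
    (hlam_ev : ∃ v : Fin n → ℝ, v ≠ 0 ∧ Q.mulVec v = lam • v)
    (hlam_min : ∀ x : Fin n → ℝ, lam * (x ⬝ᵥ x) ≤ x ⬝ᵥ Q.mulVec x)
    (hslater : ∃ x : Fin n → ℝ, x ⬝ᵥ x < 1 ∧ ∀ i, a i ⬝ᵥ x < b i)
    (hrank : Matrix.rank (Matrix.of fun (i : Fin n) (j : Fin n ⊕ Fin m) =>
        Sum.elim (fun j' : Fin n => (Q - lam • 1) i j') (fun l : Fin m => a l i) j)
      ≤ n - 1) :
    sInf {v : ℝ | ∃ x : Fin n → ℝ,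
        x ⬝ᵥ x ≤ 1 ∧ (∀ i, a i ⬝ᵥ x ≤ b i) ∧
        v = (1 / 2) * (x ⬝ᵥ Q.mulVec x) + c ⬝ᵥ x} =
      sInf {v : ℝ | ∃ (X : Matrix (Fin n) (Fin n) ℝ) (x : Fin n → ℝ),
        X.IsSymm ∧ X.trace ≤ 1 ∧ (∀ i, a i ⬝ᵥ x ≤ b i) ∧
        (Matrix.fromBlocks X (Matrix.replicateCol (Fin 1) x) (Matrix.replicateRow (Fin 1) x) 1).PosSemidef ∧
        v = (1 / 2) * (Q * X).trace + c ⬝ᵥ x} :=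
  stmt_14_general Q hQsymm c a b lam hlam_neg hlam_ev hlam_min hrank
end
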